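/- arXiv:0708.0879 — 7 statements merged into one kernel-verified Lean document; each statement's English description precedes it below -/
import Mathlib

section
/- Let p ∈ H and let L_p : ℝ⁴ → ℝ⁴ be the left translation L_p(y) = (p₁y₁−p₂y₂+p₃y₃+p₄y₄, p₂y₁+p₁y₂+p₄y₃−p₃y₄, p₃y₁+p₄y₂+p₁y₃−p₂y₄, p₄y₁−p₃y₂+p₂y₃+p₁y₄). If γ : [0,1] → H is a differentiable curve and c = L_p ∘ γ, then: (1) c(s) ∈ H for all s; (2) the horizontal coordinates are preserved, α_c(s) = α_γ(s) and β_c(s) = β_γ(s) for all s; (3) if γ is horizontal (its Y-coordinate ⟨γ̇, Y(γ)⟩ vanishes identically) then c is horizontal. Consequently L_p maps horizontal timelike future-directed curves to horizontal timelike future-directed curves, and horizontal spacelike (resp. lightlike) curves to horizontal spacelike (resp. lightlike) curves. -/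
open Real Set

noncomputable section

/-- Pseudo-Euclidean inner product of signature (2,2) on ℝ⁴. -/
def ip (x y : Fin 4 → ℝ) : ℝ :=
  -(x 0 * y 0) - x 1 * y 1 + x 2 * y 2 + x 3 * y 3

/-- Anti-de Sitter space H = {x : ⟨x,x⟩ = -1}. -/
def AdS : Set (Fin 4 → ℝ) := {x | ip x x = -1}

/-- The vector field T(x) = (−x₂, x₁, x₄, −x₃). -/
def Tf (x : Fin 4 → ℝ) : Fin 4 → ℝ := ![-(x 1), x 0, x 3, -(x 2)]

/-- The vector field X(x) = (x₃, x₄, x₁, x₂). -/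
def Xf (x : Fin 4 → ℝ) : Fin 4 → ℝ := ![x 2, x 3, x 0, x 1]

/-- The vector field Y(x) = (x₄, −x₃, −x₂, x₁). -/
def Yf (x : Fin 4 → ℝ) : Fin 4 → ℝ := ![x 3, -(x 2), -(x 1), x 0]

/-- The normal vector field N(x) = x. -/
def Nf (x : Fin 4 → ℝ) : Fin 4 → ℝ := x

/-- α(s) = ⟨ċ(s), T(c(s))⟩. -/
def alphaC (c : ℝ → Fin 4 → ℝ) (s : ℝ) : ℝ := ip (deriv c s) (Tf (c s))

/-- β(s) = ⟨ċ(s), X(c(s))⟩. -/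
def betaC (c : ℝ → Fin 4 → ℝ) (s : ℝ) : ℝ := ip (deriv c s) (Xf (c s))

/-- γ(s) = ⟨ċ(s), Y(c(s))⟩. -/
def gammaC (c : ℝ → Fin 4 → ℝ) (s : ℝ) : ℝ := ip (deriv c s) (Yf (c s))

/-- Left translation L_p(y) on the anti-de Sitter group. -/
def Lmul (p y : Fin 4 → ℝ) : Fin 4 → ℝ :=
  ![p 0 * y 0 - p 1 * y 1 + p 2 * y 2 + p 3 * y 3,
    p 1 * y 0 + p 0 * y 1 + p 3 * y 2 - p 2 * y 3,
    p 2 * y 0 + p 3 * y 1 + p 0 * y 2 - p 1 * y 3,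
    p 3 * y 0 - p 2 * y 1 + p 1 * y 2 + p 0 * y 3]

/-- Horizontal with respect to span{T,X} on [0,1]: γ ≡ 0. -/
def HorizontalTX (c : ℝ → Fin 4 → ℝ) : Prop :=
  ∀ s ∈ Set.Icc (0:ℝ) 1, gammaC c s = 0

/-- Timelike curve on [0,1]. -/
def TimelikeC (c : ℝ → Fin 4 → ℝ) : Prop :=
  ∀ s ∈ Set.Icc (0:ℝ) 1, ip (deriv c s) (deriv c s) < 0

/-- Spacelike curve on [0,1]. -/
def SpacelikeC (c : ℝ → Fin 4 → ℝ) : Prop :=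
  ∀ s ∈ Set.Icc (0:ℝ) 1, 0 < ip (deriv c s) (deriv c s)

/-- Lightlike curve on [0,1]. -/
def LightlikeC (c : ℝ → Fin 4 → ℝ) : Prop :=
  ∀ s ∈ Set.Icc (0:ℝ) 1, ip (deriv c s) (deriv c s) = 0 ∧ deriv c s ≠ 0

/-- Future-directed (timelike) curve on [0,1]: α < 0. -/
def FutureC (c : ℝ → Fin 4 → ℝ) : Prop :=
  ∀ s ∈ Set.Icc (0:ℝ) 1, alphaC c s < 0

/-! `Lmul` is left multiplication in the split quaternions, whose norm form is `-ip y y`;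
multiplicativity of the norm gives `ip (p u) (p v) = -ip p p * ip u v`, so `L_p` is an
isometry of `ip` for `p ∈ AdS`, and `p̄ p = -ip p p` makes it invertible. The fields `T`, `X`,
`Y` are the left-invariant fields `y ↦ y e₁`, `y ↦ y e₂`, `y ↦ y e₃`, so by associativity
`L_p` commutes with them. As `L_p` is linear, the velocity of `L_p ∘ γ` is `L_p γ̇`, and each
quantity in the statement becomes an `ip` of two vectors both moved by `L_p`. -/

def lmulCLM (p : Fin 4 → ℝ) : (Fin 4 → ℝ) →L[ℝ] (Fin 4 → ℝ) :=
  LinearMap.toContinuousLinearMap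
    { toFun := Lmul p
      map_add' := fun u v => by
        ext i
        fin_cases i <;>
          simp only [Lmul, Fin.zero_eta, Fin.mk_one, Fin.reduceFinMk, Matrix.cons_val,
              Pi.add_apply] <;>
          ring
      map_smul' := fun c v => by
        ext i
        fin_cases i <;>
          simp only [Lmul, RingHom.id_apply, Fin.zero_eta, Fin.mk_one, Fin.reduceFinMk,
              Matrix.cons_val, Pi.smul_apply, smul_eq_mul] <;>
          ring }

theorem deriv_Lmul_comp (p : Fin 4 → ℝ) {g : ℝ → Fin 4 → ℝ} {s : ℝ}
    (hg : DifferentiableAt ℝ g s) :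
    deriv (fun t => Lmul p (g t)) s = Lmul p (deriv g s) :=
  ((lmulCLM p).hasFDerivAt.comp_hasDerivAt s hg.hasDerivAt).deriv

theorem ip_Lmul_Lmul (p u v : Fin 4 → ℝ) :
    ip (Lmul p u) (Lmul p v) = -ip p p * ip u v := by
  simp only [ip, Lmul, Matrix.cons_val]
  ring

theorem ip_Lmul_Lmul_of_mem_AdS {p : Fin 4 → ℝ} (hp : p ∈ AdS) (u v : Fin 4 → ℝ) :
    ip (Lmul p u) (Lmul p v) = ip u v := by
  rw [ip_Lmul_Lmul, show ip p p = -1 from hp, neg_neg, one_mul]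

theorem Lmul_mem_AdS {p y : Fin 4 → ℝ} (hp : p ∈ AdS) (hy : y ∈ AdS) : Lmul p y ∈ AdS :=
  (ip_Lmul_Lmul_of_mem_AdS hp y y).trans hy

def splitConj (p : Fin 4 → ℝ) : Fin 4 → ℝ := ![p 0, -p 1, -p 2, -p 3]

theorem Lmul_splitConj_Lmul (p v : Fin 4 → ℝ) :
    Lmul (splitConj p) (Lmul p v) = (-ip p p) • v := by
  ext i
  fin_cases i <;>
    simp only [Lmul, splitConj, ip, Fin.zero_eta, Fin.mk_one, Fin.reduceFinMk, Matrix.cons_val,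
        Pi.smul_apply, smul_eq_mul] <;>
    ring

theorem Lmul_ne_zero {p v : Fin 4 → ℝ} (hp : ip p p ≠ 0) (hv : v ≠ 0) : Lmul p v ≠ 0 := by
  intro h
  have hconj := Lmul_splitConj_Lmul p v
  have hzero : Lmul (splitConj p) 0 = 0 := map_zero (lmulCLM (splitConj p))
  rw [h, hzero, eq_comm, smul_eq_zero, neg_eq_zero] at hconj
  exact hconj.elim hp hv

theorem Tf_Lmul (p y : Fin 4 → ℝ) : Tf (Lmul p y) = Lmul p (Tf y) := by
  ext i
  fin_cases i <;>
    simp only [Tf, Lmul, Fin.zero_eta, Fin.mk_one, Fin.reduceFinMk, Matrix.cons_val] <;>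
    ring

theorem Xf_Lmul (p y : Fin 4 → ℝ) : Xf (Lmul p y) = Lmul p (Xf y) := by
  ext i
  fin_cases i <;>
    simp only [Xf, Lmul, Fin.zero_eta, Fin.mk_one, Fin.reduceFinMk, Matrix.cons_val] <;>
    ring

theorem Yf_Lmul (p y : Fin 4 → ℝ) : Yf (Lmul p y) = Lmul p (Yf y) := by
  ext i
  fin_cases i <;>
    simp only [Yf, Lmul, Fin.zero_eta, Fin.mk_one, Fin.reduceFinMk, Matrix.cons_val] <;>
    ring

section Curve

variable {p : Fin 4 → ℝ} {g : ℝ → Fin 4 → ℝ} {s : ℝ}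

theorem ip_deriv_Lmul_comp (hp : p ∈ AdS) (hg : DifferentiableAt ℝ g s) (v : Fin 4 → ℝ) :
    ip (deriv (fun t => Lmul p (g t)) s) (Lmul p v) = ip (deriv g s) v := by
  rw [deriv_Lmul_comp p hg, ip_Lmul_Lmul_of_mem_AdS hp]

theorem ip_deriv_deriv_Lmul_comp (hp : p ∈ AdS) (hg : DifferentiableAt ℝ g s) :
    ip (deriv (fun t => Lmul p (g t)) s) (deriv (fun t => Lmul p (g t)) s) =
      ip (deriv g s) (deriv g s) := by
  rw [← ip_deriv_Lmul_comp hp hg, deriv_Lmul_comp p hg]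

theorem alphaC_Lmul_comp (hp : p ∈ AdS) (hg : DifferentiableAt ℝ g s) :
    alphaC (fun t => Lmul p (g t)) s = alphaC g s := by
  rw [alphaC, Tf_Lmul, ip_deriv_Lmul_comp hp hg, alphaC]

theorem betaC_Lmul_comp (hp : p ∈ AdS) (hg : DifferentiableAt ℝ g s) :
    betaC (fun t => Lmul p (g t)) s = betaC g s := by
  rw [betaC, Xf_Lmul, ip_deriv_Lmul_comp hp hg, betaC]

theorem gammaC_Lmul_comp (hp : p ∈ AdS) (hg : DifferentiableAt ℝ g s) :
    gammaC (fun t => Lmul p (g t)) s = gammaC g s := by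
  rw [gammaC, Yf_Lmul, ip_deriv_Lmul_comp hp hg, gammaC]

theorem deriv_Lmul_comp_ne_zero (hp : p ∈ AdS) (hg : DifferentiableAt ℝ g s)
    (h : deriv g s ≠ 0) : deriv (fun t => Lmul p (g t)) s ≠ 0 := by
  rw [deriv_Lmul_comp p hg]
  exact Lmul_ne_zero (by rw [show ip p p = -1 from hp]; norm_num) h

end Curve

/-- left translations preserve AdS, the horizontal coordinates α, β,
horizontality, and the causal character of horizontal curves. -/
theorem left_translation_preserves (p : Fin 4 → ℝ) (hp : p ∈ AdS)
    (g : ℝ → Fin 4 → ℝ)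
    (hd : ∀ s ∈ Set.Icc (0:ℝ) 1, DifferentiableAt ℝ g s)
    (hg : ∀ s ∈ Set.Icc (0:ℝ) 1, g s ∈ AdS) :
    (∀ s ∈ Set.Icc (0:ℝ) 1, Lmul p (g s) ∈ AdS) ∧
    (∀ s ∈ Set.Icc (0:ℝ) 1,
      alphaC (fun t => Lmul p (g t)) s = alphaC g s ∧
      betaC (fun t => Lmul p (g t)) s = betaC g s) ∧
    (HorizontalTX g → HorizontalTX (fun t => Lmul p (g t))) ∧
    (HorizontalTX g → TimelikeC g → FutureC g →
      TimelikeC (fun t => Lmul p (g t)) ∧ FutureC (fun t => Lmul p (g t))) ∧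
    (HorizontalTX g → SpacelikeC g → SpacelikeC (fun t => Lmul p (g t))) ∧
    (HorizontalTX g → LightlikeC g → LightlikeC (fun t => Lmul p (g t))) := by
  refine ⟨fun s hs => Lmul_mem_AdS hp (hg s hs),
    fun s hs => ⟨alphaC_Lmul_comp hp (hd s hs), betaC_Lmul_comp hp (hd s hs)⟩,
    fun hH s hs => (gammaC_Lmul_comp hp (hd s hs)).trans (hH s hs),
    fun _ hT hF => ⟨fun s hs => ?_, fun s hs => ?_⟩,
    fun _ hS s hs => ?_,
    fun _ hL s hs => ⟨?_, deriv_Lmul_comp_ne_zero hp (hd s hs) (hL s hs).2⟩⟩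
  · exact (ip_deriv_deriv_Lmul_comp hp (hd s hs)).trans_lt (hT s hs)
  · exact (alphaC_Lmul_comp hp (hd s hs)).trans_lt (hF s hs)
  · exact (hS s hs).trans_eq (ip_deriv_deriv_Lmul_comp hp (hd s hs)).symm
  · exact (ip_deriv_deriv_Lmul_comp hp (hd s hs)).trans (hL s hs).1
end
end

section
/- Let φ, ψ, θ : I → ℝ be differentiable functions and let c(s) = Φ(φ(s), ψ(s), θ(s)) be the corresponding curve on H. Then the coordinates of the velocity vector in the frame {T, X, Y} are α(s) = −(1/2)(φ̇ cosh 2θ + ψ̇), β(s) = (1/2)(φ̇ sin ψ sinh 2θ + 2θ̇ cos ψ), and γ(s) = (1/2)(φ̇ cos ψ sinh 2θ − 2θ̇ sin ψ). In particular, c is horizontal with respect to span{T,X} if and only if φ̇ cos ψ sinh 2θ − 2θ̇ sin ψ = 0 for all s. -/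
/-! By the chain rule `ċ = dΦ(φ̇, ψ̇, θ̇)`, so each frame coordinate is the pairing of `dΦ` with
`T`, `X` or `Y` at `Φ`. Since `ψ = a - b`, these pairings reduce to the stated expressions through
`sin² + cos² = 1`, `cosh² - sinh² = 1` and the double-angle formulas for `cosh` and `sinh`. -/

open Real Set

noncomputable section

/-- Parametrization Φ(φ,ψ,θ) of AdS, with a = (φ+ψ)/2, b = (φ−ψ)/2. -/
def Phi (φ ψ θ : ℝ) : Fin 4 → ℝ :=
  ![Real.cos ((φ + ψ)/2) * Real.cosh θ,
    Real.sin ((φ + ψ)/2) * Real.cosh θ,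
    Real.cos ((φ - ψ)/2) * Real.sinh θ,
    Real.sin ((φ - ψ)/2) * Real.sinh θ]

def dPhi (φ ψ θ φ' ψ' θ' : ℝ) : Fin 4 → ℝ :=
  ![-Real.sin ((φ + ψ)/2) * ((φ' + ψ')/2) * Real.cosh θ + Real.cos ((φ + ψ)/2) * Real.sinh θ * θ',
    Real.cos ((φ + ψ)/2) * ((φ' + ψ')/2) * Real.cosh θ + Real.sin ((φ + ψ)/2) * Real.sinh θ * θ',
    -Real.sin ((φ - ψ)/2) * ((φ' - ψ')/2) * Real.sinh θ + Real.cos ((φ - ψ)/2) * Real.cosh θ * θ',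
    Real.cos ((φ - ψ)/2) * ((φ' - ψ')/2) * Real.sinh θ + Real.sin ((φ - ψ)/2) * Real.cosh θ * θ']

theorem hasDerivAt_Phi_comp {φ ψ θ : ℝ → ℝ} {φ' ψ' θ' s : ℝ} (hφ : HasDerivAt φ φ' s)
    (hψ : HasDerivAt ψ ψ' s) (hθ : HasDerivAt θ θ' s) :
    HasDerivAt (fun t => Phi (φ t) (ψ t) (θ t)) (dPhi (φ s) (ψ s) (θ s) φ' ψ' θ') s := by
  have ha : HasDerivAt (fun t => (φ t + ψ t)/2) ((φ' + ψ')/2) s := (hφ.add hψ).div_const 2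
  have hb : HasDerivAt (fun t => (φ t - ψ t)/2) ((φ' - ψ')/2) s := (hφ.sub hψ).div_const 2
  rw [hasDerivAt_pi]
  intro i
  fin_cases i <;>
    simp only [dPhi, Fin.zero_eta, Fin.mk_one, Fin.reduceFinMk, Matrix.cons_val_zero,
      Matrix.cons_val_one, Matrix.cons_val]
  · exact (ha.cos.mul hθ.cosh).congr_deriv (by ring)
  · exact (ha.sin.mul hθ.cosh).congr_deriv (by ring)
  · exact (hb.cos.mul hθ.sinh).congr_deriv (by ring)
  · exact (hb.sin.mul hθ.sinh).congr_deriv (by ring)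

theorem cos_eq_cos_half_add_sub (φ ψ : ℝ) :
    Real.cos ψ = Real.cos ((φ + ψ)/2) * Real.cos ((φ - ψ)/2)
      + Real.sin ((φ + ψ)/2) * Real.sin ((φ - ψ)/2) := by
  rw [← Real.cos_sub]; ring_nf

theorem sin_eq_sin_half_add_sub (φ ψ : ℝ) :
    Real.sin ψ = Real.sin ((φ + ψ)/2) * Real.cos ((φ - ψ)/2)
      - Real.cos ((φ + ψ)/2) * Real.sin ((φ - ψ)/2) := by
  rw [← Real.sin_sub]; ring_nf

theorem ip_dPhi_Tf (φ ψ θ φ' ψ' θ' : ℝ) :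
    ip (dPhi φ ψ θ φ' ψ' θ') (Tf (Phi φ ψ θ)) = -(1/2) * (φ' * Real.cosh (2 * θ) + ψ') := by
  simp only [ip, dPhi, Tf, Phi, Matrix.cons_val]
  rw [Real.cosh_two_mul]
  linear_combination (-(φ' + ψ')/2 * Real.cosh θ ^ 2) * Real.sin_sq_add_cos_sq ((φ + ψ)/2)
    + (-(φ' - ψ')/2 * Real.sinh θ ^ 2) * Real.sin_sq_add_cos_sq ((φ - ψ)/2)
    - ψ'/2 * Real.cosh_sq_sub_sinh_sq θ

theorem ip_dPhi_Xf (φ ψ θ φ' ψ' θ' : ℝ) :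
    ip (dPhi φ ψ θ φ' ψ' θ') (Xf (Phi φ ψ θ))
      = (1/2) * (φ' * Real.sin ψ * Real.sinh (2 * θ) + 2 * θ' * Real.cos ψ) := by
  simp only [ip, dPhi, Xf, Phi, Matrix.cons_val]
  rw [cos_eq_cos_half_add_sub φ ψ, sin_eq_sin_half_add_sub φ ψ, Real.sinh_two_mul]
  linear_combination θ' * (Real.cos ((φ + ψ)/2) * Real.cos ((φ - ψ)/2)
    + Real.sin ((φ + ψ)/2) * Real.sin ((φ - ψ)/2)) * Real.cosh_sq_sub_sinh_sq θ

theorem ip_dPhi_Yf (φ ψ θ φ' ψ' θ' : ℝ) :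
    ip (dPhi φ ψ θ φ' ψ' θ') (Yf (Phi φ ψ θ))
      = (1/2) * (φ' * Real.cos ψ * Real.sinh (2 * θ) - 2 * θ' * Real.sin ψ) := by
  simp only [ip, dPhi, Yf, Phi, Matrix.cons_val]
  rw [cos_eq_cos_half_add_sub φ ψ, sin_eq_sin_half_add_sub φ ψ, Real.sinh_two_mul]
  linear_combination -θ' * (Real.sin ((φ + ψ)/2) * Real.cos ((φ - ψ)/2)
    - Real.cos ((φ + ψ)/2) * Real.sin ((φ - ψ)/2)) * Real.cosh_sq_sub_sinh_sq θ

/-- frame coordinates of the velocity of a curve s ↦ Φ(φ(s),ψ(s),θ(s)),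
and the horizontality criterion φ̇ cos ψ sinh 2θ − 2θ̇ sin ψ = 0 for span{T,X}. -/
theorem frame_coordinates_parametrization (φ ψ θ : ℝ → ℝ)
    (hφ : ∀ s, DifferentiableAt ℝ φ s)
    (hψ : ∀ s, DifferentiableAt ℝ ψ s)
    (hθ : ∀ s, DifferentiableAt ℝ θ s) :
    (∀ s, alphaC (fun t => Phi (φ t) (ψ t) (θ t)) s
        = -(1/2) * (deriv φ s * Real.cosh (2 * θ s) + deriv ψ s)) ∧
    (∀ s, betaC (fun t => Phi (φ t) (ψ t) (θ t)) s
        = (1/2) * (deriv φ s * Real.sin (ψ s) * Real.sinh (2 * θ s)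
            + 2 * deriv θ s * Real.cos (ψ s))) ∧
    (∀ s, gammaC (fun t => Phi (φ t) (ψ t) (θ t)) s
        = (1/2) * (deriv φ s * Real.cos (ψ s) * Real.sinh (2 * θ s)
            - 2 * deriv θ s * Real.sin (ψ s))) ∧
    ((∀ s, gammaC (fun t => Phi (φ t) (ψ t) (θ t)) s = 0) ↔
      (∀ s, deriv φ s * Real.cos (ψ s) * Real.sinh (2 * θ s)
        - 2 * deriv θ s * Real.sin (ψ s) = 0)) := by
  have hvel : ∀ s, deriv (fun t => Phi (φ t) (ψ t) (θ t)) s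
      = dPhi (φ s) (ψ s) (θ s) (deriv φ s) (deriv ψ s) (deriv θ s) := fun s =>
    (hasDerivAt_Phi_comp (hφ s).hasDerivAt (hψ s).hasDerivAt (hθ s).hasDerivAt).deriv
  have hγ : ∀ s, gammaC (fun t => Phi (φ t) (ψ t) (θ t)) s
      = (1/2) * (deriv φ s * Real.cos (ψ s) * Real.sinh (2 * θ s)
          - 2 * deriv θ s * Real.sin (ψ s)) := fun s => by
    rw [gammaC, hvel, ip_dPhi_Yf]
  refine ⟨fun s => by rw [alphaC, hvel, ip_dPhi_Tf], fun s => by rw [betaC, hvel, ip_dPhi_Xf],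
    hγ, forall_congr' fun s => ?_⟩
  simp [hγ]
end
end

section
/- For any two points P, Q ∈ H there exists a smooth curve c : [0,1] → H with c(0) = P and c(1) = Q which is horizontal with respect to the distribution span{T,X}, i.e. γ(s) = −x₄ẋ₁ + x₃ẋ₂ − x₂ẋ₃ + x₁ẋ₄ = 0 for all s ∈ [0,1]. -/
open Real Set

noncomputable section

open Complex

set_option linter.unusedVariables false
set_option linter.unreachableTactic false
set_option linter.unusedTactic false
set_option maxHeartbeats 1000000

def cis' (θ : ℝ) : ℂ := (Real.cos θ : ℂ) + (Real.sin θ : ℂ) * Complex.I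

lemma cis'_zero : cis' 0 = 1 := by simp [cis']

lemma cis'_add (x y : ℝ) : cis' (x + y) = cis' x * cis' y := by
  simp only [cis', Complex.ext_iff, Complex.add_re, Complex.add_im, Complex.mul_re,
    Complex.mul_im, Complex.ofReal_re, Complex.ofReal_im, Complex.I_re, Complex.I_im,
    Real.cos_add, Real.sin_add]
  constructor <;> ring

lemma cis'_neg (x : ℝ) : cis' (-x) = (starRingEnd ℂ) (cis' x) := by
  simp [cis', Complex.ext_iff, Real.cos_neg, Real.sin_neg]

lemma normSq_cis' (x : ℝ) : Complex.normSq (cis' x) = 1 := by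
  simp only [cis', Complex.normSq_apply, Complex.add_re, Complex.add_im, Complex.mul_re,
    Complex.mul_im, Complex.ofReal_re, Complex.ofReal_im, Complex.I_re, Complex.I_im]
  nlinarith [Real.sin_sq_add_cos_sq x]

lemma cis'_ne_zero (x : ℝ) : cis' x ≠ 0 := by
  intro h
  have := normSq_cis' x
  rw [h] at this
  simp at this

lemma hasDerivAt_cis' (θ : ℝ) : HasDerivAt cis' (Complex.I * cis' θ) θ := by
  have h1 : HasDerivAt (fun θ : ℝ => (Real.cos θ : ℂ)) (-Real.sin θ : ℝ) θ :=
    (Real.hasDerivAt_cos θ).ofReal_comp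
  have h2 : HasDerivAt (fun θ : ℝ => (Real.sin θ : ℂ) * Complex.I)
      ((Real.cos θ : ℂ) * Complex.I) θ :=
    (Real.hasDerivAt_sin θ).ofReal_comp.mul_const Complex.I
  have := h1.add h2
  refine HasDerivAt.congr_deriv this (Eq.symm ?_)
  simp only [cis']
  rw [Complex.ext_iff]
  simp [Complex.mul_re, Complex.mul_im]

lemma contDiff_cis' : ContDiff ℝ (⊤ : ℕ∞) cis' :=
  (Complex.ofRealCLM.contDiff.comp Real.contDiff_cos).add
    ((Complex.ofRealCLM.contDiff.comp Real.contDiff_sin).mul contDiff_const)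

lemma hasDerivAt_cis'_comp {f : ℝ → ℝ} {f' s : ℝ} (hf : HasDerivAt f f' s) :
    HasDerivAt (fun s => cis' (f s)) ((f' : ℂ) * (Complex.I * cis' (f s))) s := by
  have := (hasDerivAt_cis' (f s)).scomp s hf
  simpa [Complex.real_smul, Function.comp_def] using this

/-- complex coordinates of points -/

def zOf (P : Fin 4 → ℝ) : ℂ := ⟨P 0, P 1⟩

def wOf (P : Fin 4 → ℝ) : ℂ := ⟨P 2, P 3⟩

def zmOf (P Q : Fin 4 → ℝ) : ℂ :=
  zOf Q * (starRingEnd ℂ) (zOf P) - (starRingEnd ℂ) (wOf Q) * wOf P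

def wmOf (P Q : Fin 4 → ℝ) : ℂ :=
  wOf Q * (starRingEnd ℂ) (zOf P) - (starRingEnd ℂ) (zOf Q) * wOf P

lemma normSq_zw {P : Fin 4 → ℝ} (hP : P ∈ AdS) :
    Complex.normSq (zOf P) - Complex.normSq (wOf P) = 1 := by
  have : ip P P = -1 := hP
  simp only [ip] at this
  simp only [zOf, wOf, Complex.normSq_apply]
  nlinarith [this]

lemma pair_norm (z1 w1 z2 w2 : ℂ) :
    Complex.normSq (z1 * z2 + (starRingEnd ℂ) w1 * w2)
      - Complex.normSq (w1 * z2 + (starRingEnd ℂ) z1 * w2)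
    = (Complex.normSq z1 - Complex.normSq w1) * (Complex.normSq z2 - Complex.normSq w2) := by
  simp only [Complex.normSq_apply, Complex.add_re, Complex.add_im, Complex.mul_re,
    Complex.mul_im, Complex.conj_re, Complex.conj_im]
  ring

lemma normSq_zm {P Q : Fin 4 → ℝ} (hP : P ∈ AdS) (hQ : Q ∈ AdS) :
    Complex.normSq (zmOf P Q) - Complex.normSq (wmOf P Q) = 1 := by
  have h1 := normSq_zw hP
  have h2 := normSq_zw hQ
  simp only [zmOf, wmOf, Complex.normSq_apply, Complex.sub_re, Complex.sub_im,
    Complex.mul_re, Complex.mul_im, Complex.conj_re, Complex.conj_im] at *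
  nlinarith [h1, h2]

/-- the curve assembled from complex coordinates -/

def curveOf (Z W : ℝ → ℂ) : ℝ → Fin 4 → ℝ := fun s => ![(Z s).re, (Z s).im, (W s).re, (W s).im]

lemma im_pattern (l u : ℝ) (Z W : ℂ) :
    ((Complex.I * l * Z + u * W) * (starRingEnd ℂ) W
      + (-(Complex.I * l) * W + u * Z) * (starRingEnd ℂ) Z).im = 0 := by
  simp only [Complex.add_im, Complex.mul_im, Complex.mul_re, Complex.neg_re, Complex.neg_im,
    Complex.conj_re, Complex.conj_im, Complex.I_re, Complex.I_im, Complex.ofReal_re,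
    Complex.ofReal_im, Complex.add_re]
  ring

lemma master (P Q : Fin 4 → ℝ) (hP : P ∈ AdS) (hQ : Q ∈ AdS)
    (zM wM : ℝ → ℂ) (hzc : ContDiff ℝ (⊤ : ℕ∞) zM) (hwc : ContDiff ℝ (⊤ : ℕ∞) wM)
    (h00 : zM 0 = 1) (h01 : wM 0 = 0) (h10 : zM 1 = zmOf P Q) (h11 : wM 1 = wmOf P Q)
    (hnorm : ∀ s, Complex.normSq (zM s) - Complex.normSq (wM s) = 1)
    (hhor : ∀ s, ∃ l u : ℝ,
      HasDerivAt zM (Complex.I * l * zM s + u * wM s) s ∧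
      HasDerivAt wM (-(Complex.I * l) * wM s + u * zM s) s) :
    ∃ c : ℝ → Fin 4 → ℝ, ContDiff ℝ (⊤ : ℕ∞) c ∧ c 0 = P ∧ c 1 = Q ∧
      (∀ s ∈ Set.Icc (0:ℝ) 1, c s ∈ AdS) ∧
      (∀ s ∈ Set.Icc (0:ℝ) 1, gammaC c s = 0) := by
  classical
  set zP := zOf P with hzP
  set wP := wOf P with hwP
  set Z : ℝ → ℂ := fun s => zM s * zP + (starRingEnd ℂ) (wM s) * wP with hZ
  set W : ℝ → ℂ := fun s => wM s * zP + (starRingEnd ℂ) (zM s) * wP with hW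
  have hconjz : ContDiff ℝ (⊤ : ℕ∞) (fun s => (starRingEnd ℂ) (zM s)) :=
    Complex.conjCLE.toContinuousLinearMap.contDiff.comp hzc
  have hconjw : ContDiff ℝ (⊤ : ℕ∞) (fun s => (starRingEnd ℂ) (wM s)) :=
    Complex.conjCLE.toContinuousLinearMap.contDiff.comp hwc
  have hZc : ContDiff ℝ (⊤ : ℕ∞) Z := (hzc.mul contDiff_const).add (hconjw.mul contDiff_const)
  have hWc : ContDiff ℝ (⊤ : ℕ∞) W := (hwc.mul contDiff_const).add (hconjz.mul contDiff_const)
  -- key products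
  have h1' : zP * (starRingEnd ℂ) zP - wP * (starRingEnd ℂ) wP = 1 := by
    rw [Complex.mul_conj, Complex.mul_conj]
    exact_mod_cast congrArg (fun r : ℝ => (r : ℂ)) (normSq_zw hP)
  have key1 : zmOf P Q * zP + (starRingEnd ℂ) (wmOf P Q) * wP = zOf Q := by
    simp only [zmOf, wmOf, map_sub, map_mul, Complex.conj_conj, hzP, hwP]
    linear_combination zOf Q * h1'
  have key2 : wmOf P Q * zP + (starRingEnd ℂ) (zmOf P Q) * wP = wOf Q := by
    simp only [zmOf, wmOf, map_sub, map_mul, Complex.conj_conj, hzP, hwP]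
    linear_combination wOf Q * h1'
  refine ⟨curveOf Z W, ?_, ?_, ?_, ?_, ?_⟩
  · -- smoothness
    apply contDiff_pi.2
    intro i
    fin_cases i
    · exact Complex.reCLM.contDiff.comp hZc
    · exact Complex.imCLM.contDiff.comp hZc
    · exact Complex.reCLM.contDiff.comp hWc
    · exact Complex.imCLM.contDiff.comp hWc
  · -- c 0 = P
    have hZ0 : Z 0 = zP := by simp [hZ, h00, h01]
    have hW0 : W 0 = wP := by simp [hW, h00, h01]
    funext i
    fin_cases i <;> simp [curveOf, hZ0, hW0, hzP, hwP, zOf, wOf]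
  · -- c 1 = Q
    have hZ1 : Z 1 = zOf Q := by rw [hZ]; simp only [h10, h11]; exact key1
    have hW1 : W 1 = wOf Q := by rw [hW]; simp only [h10, h11]; exact key2
    funext i
    fin_cases i <;> simp [curveOf, hZ1, hW1, zOf, wOf]
  · -- membership
    intro s _
    have hZW : Complex.normSq (Z s) - Complex.normSq (W s) = 1 := by
      rw [hZ, hW]
      simp only []
      rw [pair_norm]
      rw [hnorm s, normSq_zw hP]
      ring
    show ip _ _ = -1
    simp only [ip, curveOf, Matrix.cons_val_zero, Matrix.cons_val_one, Matrix.head_cons,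
      Matrix.cons_val_two, Matrix.cons_val_three, Matrix.tail_cons]
    simp only [Complex.normSq_apply] at hZW
    linarith
  · -- gamma
    intro s _
    obtain ⟨l, u, hdz, hdw⟩ := hhor s
    have hconjdw : HasDerivAt (fun s => (starRingEnd ℂ) (wM s))
        ((starRingEnd ℂ) (-(Complex.I * l) * wM s + u * zM s)) s :=
      Complex.conjCLE.toContinuousLinearMap.hasFDerivAt.comp_hasDerivAt s hdw
    have hconjdz : HasDerivAt (fun s => (starRingEnd ℂ) (zM s))
        ((starRingEnd ℂ) (Complex.I * l * zM s + u * wM s)) s :=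
      Complex.conjCLE.toContinuousLinearMap.hasFDerivAt.comp_hasDerivAt s hdz
    have hZd : HasDerivAt Z (Complex.I * l * Z s + u * W s) s := by
      have := (hdz.mul_const zP).add (hconjdw.mul_const wP)
      refine HasDerivAt.congr_deriv this (Eq.symm ?_)
      simp only [hZ, hW, map_add, map_mul, map_neg, Complex.conj_I, Complex.conj_ofReal]
      ring
    have hWd : HasDerivAt W (-(Complex.I * l) * W s + u * Z s) s := by
      have := (hdw.mul_const zP).add (hconjdz.mul_const wP)
      refine HasDerivAt.congr_deriv this (Eq.symm ?_)
      simp only [hZ, hW, map_add, map_mul, map_neg, Complex.conj_I, Complex.conj_ofReal]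
      ring
    have hcd : HasDerivAt (curveOf Z W)
        (![(Complex.I * l * Z s + u * W s).re, (Complex.I * l * Z s + u * W s).im,
           (-(Complex.I * l) * W s + u * Z s).re, (-(Complex.I * l) * W s + u * Z s).im]) s := by
      apply hasDerivAt_pi.2
      intro i
      fin_cases i
      · exact Complex.reCLM.hasFDerivAt.comp_hasDerivAt s hZd
      · exact Complex.imCLM.hasFDerivAt.comp_hasDerivAt s hZd
      · exact Complex.reCLM.hasFDerivAt.comp_hasDerivAt s hWd
      · exact Complex.imCLM.hasFDerivAt.comp_hasDerivAt s hWd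
    have hγ : gammaC (curveOf Z W) s =
        ((Complex.I * l * Z s + u * W s) * (starRingEnd ℂ) (W s)
          + (-(Complex.I * l) * W s + u * Z s) * (starRingEnd ℂ) (Z s)).im := by
      rw [gammaC, hcd.deriv]
      simp only [ip, Yf, curveOf, Matrix.cons_val_zero, Matrix.cons_val_one, Matrix.head_cons,
        Matrix.cons_val_two, Matrix.cons_val_three, Matrix.tail_cons,
        Complex.add_im, Complex.add_re, Complex.mul_im, Complex.mul_re,
        Complex.conj_re, Complex.conj_im]
      ring
    rw [hγ, im_pattern]

lemma caseA (P Q : Fin 4 → ℝ) (hP : P ∈ AdS) (hQ : Q ∈ AdS) (hw : wmOf P Q = 0) :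
    ∃ c : ℝ → Fin 4 → ℝ, ContDiff ℝ (⊤ : ℕ∞) c ∧ c 0 = P ∧ c 1 = Q ∧
      (∀ s ∈ Set.Icc (0:ℝ) 1, c s ∈ AdS) ∧
      (∀ s ∈ Set.Icc (0:ℝ) 1, gammaC c s = 0) := by
  set zm := zmOf P Q with hzm
  have hnsq : Complex.normSq zm = 1 := by
    have := normSq_zm hP hQ
    rw [hw] at this
    simpa using this
  have habs : ‖zm‖ = 1 := by
    have h2 : ‖zm‖ ^ 2 = 1 := by rw [Complex.sq_norm]; exact hnsq
    nlinarith [norm_nonneg zm]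
  set Δ := Complex.arg zm with hΔ
  have hcis : cis' Δ = zm := by
    have := Complex.norm_mul_cos_add_sin_mul_I zm
    rw [habs] at this
    simpa [cis', Complex.ofReal_cos, Complex.ofReal_sin] using this
  apply master P Q hP hQ (fun s => cis' (Δ * s)) (fun _ => 0)
  · exact contDiff_cis'.comp (contDiff_const.mul contDiff_id)
  · exact contDiff_const
  · norm_num [cis']
  · rfl
  · rw [mul_one]; exact hcis
  · exact hw.symm
  · intro s; simp [normSq_cis']
  · intro s
    refine ⟨Δ, 0, ?_, ?_⟩
    · have hf : HasDerivAt (fun s : ℝ => Δ * s) Δ s := by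
        simpa using (hasDerivAt_id s).const_mul Δ
      have := hasDerivAt_cis'_comp hf
      convert this using 1
      ring
    · simpa using hasDerivAt_const s (0 : ℂ)

-- CASE C2b : zm.re = 0, wm.im = 0 (single horizontal exponential)

lemma caseC2b (P Q : Fin 4 → ℝ) (hP : P ∈ AdS) (hQ : Q ∈ AdS)
    (hz : (zmOf P Q).re = 0) (hw : (wmOf P Q).im = 0) :
    ∃ c : ℝ → Fin 4 → ℝ, ContDiff ℝ (⊤ : ℕ∞) c ∧ c 0 = P ∧ c 1 = Q ∧
      (∀ s ∈ Set.Icc (0:ℝ) 1, c s ∈ AdS) ∧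
      (∀ s ∈ Set.Icc (0:ℝ) 1, gammaC c s = 0) := by
  set a := (zmOf P Q).im with ha
  set b := (wmOf P Q).re with hb
  have hab : a ^ 2 - b ^ 2 = 1 := by
    have := normSq_zm hP hQ
    simp only [Complex.normSq_apply, hz, hw] at this
    nlinarith [this]
  apply master P Q hP hQ
    (fun s => (Real.cos (π / 2 * s) : ℂ) + (a * Real.sin (π / 2 * s) : ℝ) * Complex.I)
    (fun s => ((b * Real.sin (π / 2 * s) : ℝ) : ℂ))
  · apply ContDiff.add
    · exact Complex.ofRealCLM.contDiff.comp
        (Real.contDiff_cos.comp (contDiff_const.mul contDiff_id))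
    · exact (Complex.ofRealCLM.contDiff.comp
        ((contDiff_const.mul (Real.contDiff_sin.comp (contDiff_const.mul contDiff_id))))).mul
        contDiff_const
  · exact Complex.ofRealCLM.contDiff.comp
      (contDiff_const.mul (Real.contDiff_sin.comp (contDiff_const.mul contDiff_id)))
  · norm_num
  · norm_num
  · rw [mul_one, Real.cos_pi_div_two, Real.sin_pi_div_two]
    refine Complex.ext ?_ ?_
    · simp [hz]
    · simp [ha]
  · rw [mul_one, Real.sin_pi_div_two]
    refine Complex.ext ?_ ?_
    · simp [hb]
    · simp [hw]
  · intro s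
    simp only [Complex.normSq_apply, Complex.add_re, Complex.add_im, Complex.mul_re,
      Complex.mul_im, Complex.ofReal_re, Complex.ofReal_im, Complex.I_re, Complex.I_im]
    nlinarith [Real.sin_sq_add_cos_sq (π / 2 * s)]
  · intro s
    refine ⟨π / 2 * a, π / 2 * b, ?_, ?_⟩
    · have hlin : HasDerivAt (fun s : ℝ => π / 2 * s) (π / 2) s := by
        simpa using (hasDerivAt_id s).const_mul (π / 2)
      have h1 : HasDerivAt (fun s : ℝ => (Real.cos (π / 2 * s) : ℂ))
          ((-Real.sin (π / 2 * s) * (π / 2) : ℝ) : ℂ) s :=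
        ((Real.hasDerivAt_cos (π / 2 * s)).comp s hlin).ofReal_comp
      have h2 : HasDerivAt (fun s : ℝ => ((a * Real.sin (π / 2 * s) : ℝ) : ℂ) * Complex.I)
          (((a * (Real.cos (π / 2 * s) * (π / 2)) : ℝ) : ℂ) * Complex.I) s := by
        apply HasDerivAt.mul_const
        exact (((Real.hasDerivAt_sin (π / 2 * s)).comp s hlin).const_mul a).ofReal_comp
      have := h1.add h2
      refine HasDerivAt.congr_deriv this (Eq.symm ?_)
      refine Complex.ext ?_ ?_ <;>
        simp only [Complex.add_re, Complex.add_im, Complex.mul_re, Complex.mul_im,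
          Complex.ofReal_re, Complex.ofReal_im, Complex.I_re, Complex.I_im]
      · linear_combination (-(π / 2) * Real.sin (π / 2 * s)) * hab
      · ring
    · have hlin : HasDerivAt (fun s : ℝ => π / 2 * s) (π / 2) s := by
        simpa using (hasDerivAt_id s).const_mul (π / 2)
      have h1 : HasDerivAt (fun s : ℝ => ((b * Real.sin (π / 2 * s) : ℝ) : ℂ))
          (((b * (Real.cos (π / 2 * s) * (π / 2)) : ℝ) : ℂ)) s :=
        (((Real.hasDerivAt_sin (π / 2 * s)).comp s hlin).const_mul b).ofReal_comp
      convert h1 using 1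
      refine Complex.ext ?_ ?_ <;>
        simp only [Complex.add_re, Complex.add_im, Complex.mul_re, Complex.mul_im,
          Complex.neg_re, Complex.neg_im, Complex.ofReal_re, Complex.ofReal_im,
          Complex.I_re, Complex.I_im] <;>
        ring

-- reversal

lemma reverse (P Q : Fin 4 → ℝ)
    (h : ∃ c : ℝ → Fin 4 → ℝ, ContDiff ℝ (⊤ : ℕ∞) c ∧ c 0 = Q ∧ c 1 = P ∧
      (∀ s ∈ Set.Icc (0:ℝ) 1, c s ∈ AdS) ∧
      (∀ s ∈ Set.Icc (0:ℝ) 1, gammaC c s = 0)) :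
    ∃ c : ℝ → Fin 4 → ℝ, ContDiff ℝ (⊤ : ℕ∞) c ∧ c 0 = P ∧ c 1 = Q ∧
      (∀ s ∈ Set.Icc (0:ℝ) 1, c s ∈ AdS) ∧
      (∀ s ∈ Set.Icc (0:ℝ) 1, gammaC c s = 0) := by
  obtain ⟨c, hc, h0, h1, hmem, hγ⟩ := h
  refine ⟨fun s => c (1 - s), hc.comp (contDiff_const.sub contDiff_id), by simpa using h1,
    by simpa using h0, ?_, ?_⟩
  · intro s hs
    exact hmem (1 - s) ⟨by linarith [hs.2], by linarith [hs.1]⟩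
  · intro s hs
    have hmem' : (1:ℝ) - s ∈ Set.Icc (0:ℝ) 1 := ⟨by linarith [hs.2], by linarith [hs.1]⟩
    have hD : HasDerivAt c (deriv c (1 - s)) (1 - s) :=
      ((hc.differentiable (by simp)).differentiableAt).hasDerivAt
    have haff : HasDerivAt (fun s : ℝ => 1 - s) (-1) s := by
      simpa using (hasDerivAt_id s).const_sub (1:ℝ)
    have hcomp : HasDerivAt (fun s => c (1 - s)) ((-1 : ℝ) • deriv c (1 - s)) s :=
      hD.scomp s haff
    have h0' := hγ (1 - s) hmem'
    rw [gammaC] at h0' ⊢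
    rw [hcomp.deriv]
    simp only [ip, Pi.smul_apply, smul_eq_mul] at h0' ⊢
    linarith [h0']

lemma kak' (zm wm : ℂ) (hn : Complex.normSq zm - Complex.normSq wm = 1) (hw : wm ≠ 0)
    (hperp : (zm * (starRingEnd ℂ) wm).re ≠ 0) :
    ∃ v u t : ℝ, u ≠ 0 ∧ |v| < π / 4 ∧
      zm = (Real.cosh u : ℂ) * cis' (v + t) ∧ wm = (Real.sinh u : ℂ) * cis' (t - v) := by
  set u₁ := Real.arsinh (‖wm‖) with hu₁
  have hwpos : 0 < ‖wm‖ := norm_pos_iff.mpr hw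
  have hu₁pos : 0 < u₁ := Real.arsinh_pos_iff.2 hwpos
  have hs : Real.sinh u₁ = ‖wm‖ := Real.sinh_arsinh _
  have hc : Real.cosh u₁ = ‖zm‖ := by
    rw [hu₁, Real.cosh_arsinh]
    have h2 : ‖zm‖ ^ 2 = 1 + ‖wm‖ ^ 2 := by
      rw [Complex.sq_norm, Complex.sq_norm]; linarith [hn]
    rw [show (1 + ‖wm‖ ^ 2 : ℝ) = ‖zm‖ ^ 2 from h2.symm]
    exact Real.sqrt_sq (norm_nonneg _)
  set α := Complex.arg zm with hα
  set β := Complex.arg wm with hβ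
  have hza : zm = (‖zm‖ : ℂ) * cis' α := by
    have := Complex.norm_mul_cos_add_sin_mul_I zm
    conv_lhs => rw [← this]
    simp only [cis', Complex.ofReal_cos, Complex.ofReal_sin, hα]
  have hwb : wm = (‖wm‖ : ℂ) * cis' β := by
    have := Complex.norm_mul_cos_add_sin_mul_I wm
    conv_lhs => rw [← this]
    simp only [cis', Complex.ofReal_cos, Complex.ofReal_sin, hβ]
  -- cos (α - β) ≠ 0
  have hcos : Real.cos (α - β) ≠ 0 := by
    intro h0
    apply hperp
    rw [hza, hwb]
    have : (starRingEnd ℂ) ((‖wm‖ : ℂ) * cis' β)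
        = (‖wm‖ : ℂ) * cis' (-β) := by
      simp [cis', Complex.ext_iff, Real.cos_neg, Real.sin_neg]
    rw [this]
    have : (‖zm‖ : ℂ) * cis' α * ((‖wm‖ : ℂ) * cis' (-β))
        = (‖zm‖ * ‖wm‖ : ℝ) * cis' (α - β) := by
      rw [show α - β = α + (-β) by ring, cis'_add]
      push_cast
      ring
    rw [this]
    have hre : ((‖zm‖ * ‖wm‖ : ℝ) * cis' (α - β) : ℂ).re
        = (‖zm‖ * ‖wm‖) * Real.cos (α - β) := by
      simp only [cis', Complex.mul_re, Complex.add_re, Complex.add_im, Complex.mul_im,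
        Complex.ofReal_re, Complex.ofReal_im, Complex.I_re, Complex.I_im]
      ring
    rw [hre, h0, mul_zero]
  set n : ℤ := round ((α - β) / 2 / (π / 2)) with hnn
  set v := (α - β) / 2 - n * (π / 2) with hv
  have hπ : (0:ℝ) < π := Real.pi_pos
  have hvle : |v| ≤ π / 4 := by
    have h1 : |(α - β) / 2 / (π / 2) - n| ≤ 1 / 2 := abs_sub_round _
    have h2 : v = ((α - β) / 2 / (π / 2) - n) * (π / 2) := by
      rw [hv]
      field_simp
    rw [h2, abs_mul, abs_of_pos (by positivity : (0:ℝ) < π / 2)]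
    calc |(α - β) / 2 / (π / 2) - ↑n| * (π / 2) ≤ 1 / 2 * (π / 2) := by
          apply mul_le_mul_of_nonneg_right h1 (by positivity)
      _ = π / 4 := by ring
  have hsinnpi : Real.sin (n * π) = 0 := Real.sin_int_mul_pi n
  have hcos2v : Real.cos (2 * v) ≠ 0 := by
    have h2v : 2 * v = (α - β) - n * π := by rw [hv]; ring
    rw [h2v, Real.cos_sub, hsinnpi, mul_zero, add_zero]
    intro h0
    rcases mul_eq_zero.1 h0 with h | h
    · exact hcos h
    · have := Real.sin_sq_add_cos_sq (n * π)
      rw [hsinnpi, h] at this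
      norm_num at this
  have hvlt : |v| < π / 4 := by
    rcases lt_or_eq_of_le hvle with h | h
    · exact h
    · exfalso
      apply hcos2v
      rcases abs_eq (by positivity : (0:ℝ) ≤ π / 4) |>.1 h with h' | h'
      · rw [h']; rw [show 2 * (π / 4) = π / 2 by ring, Real.cos_pi_div_two]
      · rw [h']; rw [show 2 * -(π / 4) = -(π / 2) by ring, Real.cos_neg, Real.cos_pi_div_two]
  -- the cis(nπ) factor
  set e := Real.cos (n * π) with he
  have he2 : e ^ 2 = 1 := by
    have := Real.sin_sq_add_cos_sq (n * π)
    rw [hsinnpi] at this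
    nlinarith [this]
  have hcisnpi : cis' (n * π) = (e : ℂ) := by
    simp [cis', hsinnpi, he]
  have hee : e = 1 ∨ e = -1 := by
    rcases mul_eq_zero.1 (show (e - 1) * (e + 1) = 0 by nlinarith [he2]) with h | h
    · left; linarith
    · right; linarith
  set t := (α + β) / 2 + n * (π / 2) with ht
  have hvt : v + t = α := by rw [hv, ht]; ring
  have htv : t - v = β + n * π := by rw [hv, ht]; ring
  have hzmid : zm = (Real.cosh u₁ : ℂ) * cis' (v + t) := by
    rw [hvt, hc]; exact hza
  have hcistv : cis' (t - v) = cis' β * (e:ℂ) := by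
    rw [htv, cis'_add, hcisnpi]
  rcases hee with h1 | h1
  · refine ⟨v, u₁, t, ne_of_gt hu₁pos, hvlt, hzmid, ?_⟩
    rw [hcistv, h1, hs]
    conv_lhs => rw [hwb]
    push_cast; ring
  · refine ⟨v, -u₁, t, by intro h; apply ne_of_gt hu₁pos; linarith [neg_eq_zero.1 h], hvlt, ?_, ?_⟩
    · rw [Real.cosh_neg]; exact hzmid
    · rw [Real.sinh_neg, hcistv, h1, hs]
      conv_lhs => rw [hwb]
      push_cast; ring

def mB (lam t : ℝ) : ℝ → ℝ := fun s => (3*t - lam)*s^2 + (lam - 2*t)*s^3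

def dmB (lam t : ℝ) : ℝ → ℝ := fun s => (3*t - lam)*(2*s) + (lam - 2*t)*(3*s^2)

def ddmB (lam t : ℝ) : ℝ → ℝ := fun s => (3*t - lam)*2 + (lam - 2*t)*(6*s)

def XB (lam t u : ℝ) : ℝ → ℝ := fun s => dmB lam t s * Real.sinh (2*(u*s)) / u

def dXB (lam t u : ℝ) : ℝ → ℝ := fun s =>
  (ddmB lam t s * Real.sinh (2*(u*s)) + dmB lam t s * (Real.cosh (2*(u*s)) * (2*u))) / u

def pB (lam t u : ℝ) : ℝ → ℝ := fun s => Real.arctan (XB lam t u s) / 2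

def dpB (lam t u : ℝ) : ℝ → ℝ := fun s => 1/(1 + XB lam t u s^2) * dXB lam t u s / 2

def zMB (lam t u : ℝ) : ℝ → ℂ := fun s => (Real.cosh (u*s) : ℂ) * cis' (pB lam t u s + mB lam t s)

def wMB (lam t u : ℝ) : ℝ → ℂ := fun s => (Real.sinh (u*s) : ℂ) * cis' (mB lam t s - pB lam t u s)

lemma hasDerivAt_mB (lam t s : ℝ) : HasDerivAt (mB lam t) (dmB lam t s) s := by
  have := ((hasDerivAt_pow 2 s).const_mul (3*t - lam)).add ((hasDerivAt_pow 3 s).const_mul (lam - 2*t))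
  refine HasDerivAt.congr_deriv this (Eq.symm ?_)
  simp only [dmB]
  push_cast
  ring

lemma hasDerivAt_dmB (lam t s : ℝ) : HasDerivAt (dmB lam t) (ddmB lam t s) s := by
  have := (((hasDerivAt_id s).const_mul (2:ℝ)).const_mul (3*t - lam)).add
    (((hasDerivAt_pow 2 s).const_mul (3:ℝ)).const_mul (lam - 2*t))
  refine HasDerivAt.congr_deriv this (Eq.symm ?_)
  simp only [ddmB]; push_cast; ring

lemma hasDerivAt_sinh2 (u s : ℝ) :
    HasDerivAt (fun s => Real.sinh (2*(u*s))) (Real.cosh (2*(u*s)) * (2*u)) s := by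
  have hlin : HasDerivAt (fun s : ℝ => 2*(u*s)) (2*u) s := by
    simpa [mul_assoc] using ((hasDerivAt_id s).const_mul u).const_mul 2
  exact (Real.hasDerivAt_sinh _).comp s hlin

lemma hasDerivAt_XB (lam t u s : ℝ) : HasDerivAt (XB lam t u) (dXB lam t u s) s := by
  have := ((hasDerivAt_dmB lam t s).mul (hasDerivAt_sinh2 u s)).div_const u
  exact this

lemma hasDerivAt_pB (lam t u s : ℝ) : HasDerivAt (pB lam t u) (dpB lam t u s) s := by
  have := ((Real.hasDerivAt_arctan (XB lam t u s)).comp s (hasDerivAt_XB lam t u s)).div_const 2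
  exact this

lemma contDiff_mB (lam t : ℝ) : ContDiff ℝ (⊤ : ℕ∞) (mB lam t) :=
  (contDiff_const.mul (contDiff_id.pow 2)).add (contDiff_const.mul (contDiff_id.pow 3))

lemma contDiff_dmB (lam t : ℝ) : ContDiff ℝ (⊤ : ℕ∞) (dmB lam t) :=
  (contDiff_const.mul (contDiff_const.mul contDiff_id)).add
    (contDiff_const.mul (contDiff_const.mul (contDiff_id.pow 2)))

lemma contDiff_XB (lam t u : ℝ) : ContDiff ℝ (⊤ : ℕ∞) (XB lam t u) :=
  ((contDiff_dmB lam t).mul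
    (Real.contDiff_sinh.comp (contDiff_const.mul (contDiff_const.mul contDiff_id)))).div_const u

lemma contDiff_pB (lam t u : ℝ) : ContDiff ℝ (⊤ : ℕ∞) (pB lam t u) :=
  (Real.contDiff_arctan.comp (contDiff_XB lam t u)).div_const 2

lemma contDiff_zMB (lam t u : ℝ) : ContDiff ℝ (⊤ : ℕ∞) (zMB lam t u) :=
  (Complex.ofRealCLM.contDiff.comp
    (Real.contDiff_cosh.comp (contDiff_const.mul contDiff_id))).mul
    (contDiff_cis'.comp ((contDiff_pB lam t u).add (contDiff_mB lam t)))

lemma contDiff_wMB (lam t u : ℝ) : ContDiff ℝ (⊤ : ℕ∞) (wMB lam t u) :=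
  (Complex.ofRealCLM.contDiff.comp
    (Real.contDiff_sinh.comp (contDiff_const.mul contDiff_id))).mul
    (contDiff_cis'.comp ((contDiff_mB lam t).sub (contDiff_pB lam t u)))

lemma caseB_key (ch sh ch2 sh2 c2 s2 dp dm u : ℝ)
    (hch2 : ch2 = ch^2 + sh^2) (hsh2 : sh2 = 2*sh*ch) (hpy : ch^2 - sh^2 = 1)
    (hpy2 : s2^2 + c2^2 = 1) (hcon : dm * sh2 * c2 = u * s2) :
    Complex.I * (dp + dm * ch2 : ℝ) * (ch : ℝ)
      + ((u * c2 + dm * sh2 * s2 : ℝ) : ℂ) * (sh : ℝ) * ((c2 : ℝ) - (s2 : ℝ) * Complex.I)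
      = ((sh * u : ℝ) : ℂ) + (ch : ℝ) * ((dp + dm : ℝ) * (Complex.I * 1)) := by
  refine Complex.ext ?_ ?_ <;>
    simp only [Complex.add_re, Complex.add_im, Complex.sub_re, Complex.sub_im, Complex.mul_re,
      Complex.mul_im, Complex.I_re, Complex.I_im, Complex.ofReal_re, Complex.ofReal_im,
      Complex.one_re, Complex.one_im]
  · linear_combination (s2*sh)*hcon + (u*sh)*hpy2
  · linear_combination (c2*sh)*hcon + (-(dm*sh2*sh))*hpy2 + (dm*ch)*hch2 + (-(dm*sh))*hsh2
      + (dm*ch)*hpy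

lemma caseB_key2 (ch sh ch2 sh2 c2 s2 dp dm u : ℝ)
    (hch2 : ch2 = ch^2 + sh^2) (hsh2 : sh2 = 2*sh*ch) (hpy : ch^2 - sh^2 = 1)
    (hpy2 : s2^2 + c2^2 = 1) (hcon : dm * sh2 * c2 = u * s2) :
    -(Complex.I * (dp + dm * ch2 : ℝ)) * (sh : ℝ)
      + ((u * c2 + dm * sh2 * s2 : ℝ) : ℂ) * (ch : ℝ) * ((c2 : ℝ) + (s2 : ℝ) * Complex.I)
      = ((ch * u : ℝ) : ℂ) + (sh : ℝ) * ((dm - dp : ℝ) * (Complex.I * 1)) := by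
  refine Complex.ext ?_ ?_ <;>
    simp only [Complex.add_re, Complex.add_im, Complex.neg_re, Complex.neg_im, Complex.mul_re,
      Complex.mul_im, Complex.I_re, Complex.I_im, Complex.ofReal_re, Complex.ofReal_im,
      Complex.one_re, Complex.one_im]
  · linear_combination (s2*ch)*hcon + (u*ch)*hpy2
  · linear_combination (-(c2*ch))*hcon + (dm*sh2*ch)*hpy2 + (-(dm*sh))*hch2 + (dm*ch)*hsh2
      + (dm*sh)*hpy

lemma conB (lam t u : ℝ) (hu : u ≠ 0) (s : ℝ) :
    dmB lam t s * Real.sinh (2*(u*s)) * Real.cos (2 * pB lam t u s)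
      = u * Real.sin (2 * pB lam t u s) := by
  have h2p : 2 * pB lam t u s = Real.arctan (XB lam t u s) := by
    simp only [pB]; ring
  rw [h2p, Real.cos_arctan, Real.sin_arctan]
  have hXu : XB lam t u s * u = dmB lam t s * Real.sinh (2*(u*s)) := by
    simp only [XB]; field_simp
  rw [mul_one_div, ← mul_div_assoc]
  congr 1
  linear_combination -hXu

lemma hhorB (lam t u : ℝ) (hu : u ≠ 0) (s : ℝ) :
    ∃ l uu : ℝ,
      HasDerivAt (zMB lam t u) (Complex.I * l * zMB lam t u s + uu * wMB lam t u s) s ∧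
      HasDerivAt (wMB lam t u) (-(Complex.I * l) * wMB lam t u s + uu * zMB lam t u s) s := by
  set ps := pB lam t u s
  set ms := mB lam t s
  refine ⟨dpB lam t u s + dmB lam t s * Real.cosh (2*(u*s)),
          u * Real.cos (2 * ps) + dmB lam t s * Real.sinh (2*(u*s)) * Real.sin (2 * ps), ?_, ?_⟩
  · have hcosh : HasDerivAt (fun s => (Real.cosh (u*s) : ℂ)) ((Real.sinh (u*s) * u : ℝ) : ℂ) s := by
      have hlin : HasDerivAt (fun s : ℝ => u*s) u s := by
        simpa using (hasDerivAt_id s).const_mul u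
      exact ((Real.hasDerivAt_cosh _).comp s hlin).ofReal_comp
    have hcis := hasDerivAt_cis'_comp ((hasDerivAt_pB lam t u s).add (hasDerivAt_mB lam t s))
    have hraw := hcosh.mul hcis
    refine HasDerivAt.congr_deriv hraw (Eq.symm ?_)
    have hsplit : cis' (ms - ps) = cis' (ps + ms)
        * ((Real.cos (2 * ps) : ℝ) - (Real.sin (2 * ps) : ℝ) * Complex.I) := by
      have h1 : ms - ps = (ps + ms) + (-(2 * ps)) := by ring
      rw [h1, cis'_add]
      congr 1
      simp only [cis', Real.cos_neg, Real.sin_neg]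
      push_cast
      ring
    show _ = _
    simp only [zMB, wMB]
    rw [hsplit]
    have hkey := caseB_key (Real.cosh (u*s)) (Real.sinh (u*s)) (Real.cosh (2*(u*s)))
      (Real.sinh (2*(u*s))) (Real.cos (2*ps)) (Real.sin (2*ps))
      (dpB lam t u s) (dmB lam t s) u
      (by rw [Real.cosh_two_mul])
      (by rw [Real.sinh_two_mul])
      (Real.cosh_sq_sub_sinh_sq (u*s))
      (Real.sin_sq_add_cos_sq (2*ps))
      (conB lam t u hu s)
    linear_combination cis' (ps + ms) * hkey
  · have hsinh : HasDerivAt (fun s => (Real.sinh (u*s) : ℂ)) ((Real.cosh (u*s) * u : ℝ) : ℂ) s := by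
      have hlin : HasDerivAt (fun s : ℝ => u*s) u s := by
        simpa using (hasDerivAt_id s).const_mul u
      exact ((Real.hasDerivAt_sinh _).comp s hlin).ofReal_comp
    have hcis := hasDerivAt_cis'_comp ((hasDerivAt_mB lam t s).sub (hasDerivAt_pB lam t u s))
    have hraw := hsinh.mul hcis
    refine HasDerivAt.congr_deriv hraw (Eq.symm ?_)
    have hsplit : cis' (ps + ms) = cis' (ms - ps)
        * ((Real.cos (2 * ps) : ℝ) + (Real.sin (2 * ps) : ℝ) * Complex.I) := by
      have h1 : ps + ms = (ms - ps) + 2 * ps := by ring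
      rw [h1, cis'_add]
      rfl
    show _ = _
    simp only [zMB, wMB]
    rw [hsplit]
    have hkey := caseB_key2 (Real.cosh (u*s)) (Real.sinh (u*s)) (Real.cosh (2*(u*s)))
      (Real.sinh (2*(u*s))) (Real.cos (2*ps)) (Real.sin (2*ps))
      (dpB lam t u s) (dmB lam t s) u
      (by rw [Real.cosh_two_mul])
      (by rw [Real.sinh_two_mul])
      (Real.cosh_sq_sub_sinh_sq (u*s))
      (Real.sin_sq_add_cos_sq (2*ps))
      (conB lam t u hu s)
    linear_combination cis' (ms - ps) * hkey

lemma caseB (P Q : Fin 4 → ℝ) (hP : P ∈ AdS) (hQ : Q ∈ AdS) (hw : wmOf P Q ≠ 0)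
    (hperp : (zmOf P Q * (starRingEnd ℂ) (wmOf P Q)).re ≠ 0) :
    ∃ c : ℝ → Fin 4 → ℝ, ContDiff ℝ (⊤ : ℕ∞) c ∧ c 0 = P ∧ c 1 = Q ∧
      (∀ s ∈ Set.Icc (0:ℝ) 1, c s ∈ AdS) ∧
      (∀ s ∈ Set.Icc (0:ℝ) 1, gammaC c s = 0) := by
  obtain ⟨v, u, t, hu, hv, hzm, hwm⟩ :=
    kak' (zmOf P Q) (wmOf P Q) (normSq_zm hP hQ) hw hperp
  have hsinh2u : Real.sinh (2*u) ≠ 0 := by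
    intro h
    apply hu
    have := Real.sinh_injective (h.trans Real.sinh_zero.symm)
    linarith
  set lam := u * Real.tan (2*v) / Real.sinh (2*u) with hlam
  have hm1 : mB lam t 1 = t := by simp [mB]; ring
  have hdm1 : dmB lam t 1 = lam := by simp [dmB]; ring
  have hX1 : XB lam t u 1 = Real.tan (2*v) := by
    simp only [XB, hdm1, mul_one]
    rw [hlam]
    field_simp
  have hp1 : pB lam t u 1 = v := by
    have hb := abs_lt.1 hv
    simp only [pB, hX1]
    rw [Real.arctan_tan (by linarith) (by linarith)]
    ring
  apply master P Q hP hQ (zMB lam t u) (wMB lam t u)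
    (contDiff_zMB lam t u) (contDiff_wMB lam t u)
  · norm_num [zMB, pB, XB, mB, dmB, cis']
  · norm_num [wMB]
  · show (Real.cosh (u*1) : ℂ) * cis' (pB lam t u 1 + mB lam t 1) = zmOf P Q
    rw [hp1, hm1, mul_one]
    exact hzm.symm
  · show (Real.sinh (u*1) : ℂ) * cis' (mB lam t 1 - pB lam t u 1) = wmOf P Q
    rw [hp1, hm1, mul_one]
    exact hwm.symm
  · intro s
    simp only [zMB, wMB, Complex.normSq_mul, normSq_cis', Complex.normSq_ofReal, mul_one]
    nlinarith [Real.cosh_sq_sub_sinh_sq (u*s)]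
  · exact hhorB lam t u hu

def zC (τ κ a : ℝ) : ℝ → ℂ := fun s =>
  ((Real.cosh (τ*s) * Real.cos (κ*s) - τ * Real.sinh (τ*s) * Real.sin (κ*s) / κ : ℝ) : ℂ)
  + ((a * Real.cosh (τ*s) * Real.sin (κ*s) / κ : ℝ) : ℂ) * Complex.I

def wC (τ κ a : ℝ) : ℝ → ℂ := fun s =>
  ((-(a * Real.sinh (τ*s) * Real.sin (κ*s) / κ) : ℝ) : ℂ)
  + ((Real.sinh (τ*s) * Real.cos (κ*s) - τ * Real.cosh (τ*s) * Real.sin (κ*s) / κ : ℝ) : ℂ)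
    * Complex.I

lemma contDiff_zC (τ κ a : ℝ) : ContDiff ℝ (⊤ : ℕ∞) (zC τ κ a) := by
  have hch : ContDiff ℝ (⊤ : ℕ∞) (fun s : ℝ => Real.cosh (τ*s)) :=
    Real.contDiff_cosh.comp (contDiff_const.mul contDiff_id)
  have hsh : ContDiff ℝ (⊤ : ℕ∞) (fun s : ℝ => Real.sinh (τ*s)) :=
    Real.contDiff_sinh.comp (contDiff_const.mul contDiff_id)
  have hc : ContDiff ℝ (⊤ : ℕ∞) (fun s : ℝ => Real.cos (κ*s)) :=
    Real.contDiff_cos.comp (contDiff_const.mul contDiff_id)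
  have hs : ContDiff ℝ (⊤ : ℕ∞) (fun s : ℝ => Real.sin (κ*s)) :=
    Real.contDiff_sin.comp (contDiff_const.mul contDiff_id)
  exact (Complex.ofRealCLM.contDiff.comp
      ((hch.mul hc).sub ((((contDiff_const.mul hsh)).mul hs).div_const κ))).add
    ((Complex.ofRealCLM.contDiff.comp ((((contDiff_const.mul hch)).mul hs).div_const κ)).mul contDiff_const)

lemma contDiff_wC (τ κ a : ℝ) : ContDiff ℝ (⊤ : ℕ∞) (wC τ κ a) := by
  have hch : ContDiff ℝ (⊤ : ℕ∞) (fun s : ℝ => Real.cosh (τ*s)) :=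
    Real.contDiff_cosh.comp (contDiff_const.mul contDiff_id)
  have hsh : ContDiff ℝ (⊤ : ℕ∞) (fun s : ℝ => Real.sinh (τ*s)) :=
    Real.contDiff_sinh.comp (contDiff_const.mul contDiff_id)
  have hc : ContDiff ℝ (⊤ : ℕ∞) (fun s : ℝ => Real.cos (κ*s)) :=
    Real.contDiff_cos.comp (contDiff_const.mul contDiff_id)
  have hs : ContDiff ℝ (⊤ : ℕ∞) (fun s : ℝ => Real.sin (κ*s)) :=
    Real.contDiff_sin.comp (contDiff_const.mul contDiff_id)
  exact (Complex.ofRealCLM.contDiff.comp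
      ((((contDiff_const.mul hsh).mul hs)).div_const κ).neg).add
    ((Complex.ofRealCLM.contDiff.comp
      ((hsh.mul hc).sub ((((contDiff_const.mul hch)).mul hs).div_const κ))).mul contDiff_const)

lemma hhorC (τ κ a : ℝ) (hκ : κ ≠ 0) (hpya : a^2 = τ^2 + κ^2) (s : ℝ) :
    ∃ l u : ℝ,
      HasDerivAt (zC τ κ a) (Complex.I * l * zC τ κ a s + u * wC τ κ a s) s ∧
      HasDerivAt (wC τ κ a) (-(Complex.I * l) * wC τ κ a s + u * zC τ κ a s) s := by
  have hlinτ : HasDerivAt (fun s : ℝ => τ*s) τ s := by simpa using (hasDerivAt_id s).const_mul τ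
  have hlinκ : HasDerivAt (fun s : ℝ => κ*s) κ s := by simpa using (hasDerivAt_id s).const_mul κ
  have hch : HasDerivAt (fun s : ℝ => Real.cosh (τ*s)) (Real.sinh (τ*s) * τ) s := by
    simpa [Function.comp_def] using (Real.hasDerivAt_cosh (τ*s)).comp s hlinτ
  have hsh : HasDerivAt (fun s : ℝ => Real.sinh (τ*s)) (Real.cosh (τ*s) * τ) s := by
    simpa [Function.comp_def] using (Real.hasDerivAt_sinh (τ*s)).comp s hlinτ
  have hc : HasDerivAt (fun s : ℝ => Real.cos (κ*s)) (-Real.sin (κ*s) * κ) s := by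
    simpa [Function.comp_def] using (Real.hasDerivAt_cos (κ*s)).comp s hlinκ
  have hs : HasDerivAt (fun s : ℝ => Real.sin (κ*s)) (Real.cos (κ*s) * κ) s := by
    simpa [Function.comp_def] using (Real.hasDerivAt_sin (κ*s)).comp s hlinκ
  have hpy := Real.cosh_sq_sub_sinh_sq (τ*s)
  have hinv : κ * κ⁻¹ = 1 := mul_inv_cancel₀ hκ
  refine ⟨a * (Real.cosh (τ*s)^2 + Real.sinh (τ*s)^2),
          -(a * (2 * Real.sinh (τ*s) * Real.cosh (τ*s))), ?_, ?_⟩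
  · have hf := (hch.mul hc).sub (((hsh.const_mul τ).mul hs).div_const κ)
    have hg := ((hch.const_mul a).mul hs).div_const κ
    have hraw := hf.ofReal_comp.add (hg.ofReal_comp.mul_const Complex.I)
    refine HasDerivAt.congr_deriv hraw (Eq.symm ?_)
    refine Complex.ext ?_ ?_ <;>
      simp only [zC, wC, Complex.add_re, Complex.add_im, Complex.mul_re, Complex.mul_im,
        Complex.neg_re, Complex.neg_im, Complex.I_re, Complex.I_im, Complex.ofReal_re,
        Complex.ofReal_im]
    · linear_combination (-(Real.cosh (τ*s) * Real.sin (κ*s) * κ⁻¹)) * hpya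
        + (-(a^2 * Real.cosh (τ*s) * Real.sin (κ*s) * κ⁻¹)) * hpy
        + (τ * Real.sinh (τ*s) * Real.cos (κ*s) - Real.cosh (τ*s) * Real.sin (κ*s) * κ) * hinv
    · linear_combination (a * Real.cos (κ*s) * Real.cosh (τ*s)
          + a * τ * Real.sin (κ*s) * κ⁻¹ * Real.sinh (τ*s)) * hpy
        + (-(a * Real.cos (κ*s) * Real.cosh (τ*s))) * hinv
  · have hf := (((hsh.const_mul a).mul hs).div_const κ).neg
    have hg := (hsh.mul hc).sub (((hch.const_mul τ).mul hs).div_const κ)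
    have hraw := hf.ofReal_comp.add (hg.ofReal_comp.mul_const Complex.I)
    refine HasDerivAt.congr_deriv hraw (Eq.symm ?_)
    refine Complex.ext ?_ ?_ <;>
      simp only [zC, wC, Complex.add_re, Complex.add_im, Complex.mul_re, Complex.mul_im,
        Complex.neg_re, Complex.neg_im, Complex.I_re, Complex.I_im, Complex.ofReal_re,
        Complex.ofReal_im]
    · linear_combination (-(a * Real.cos (κ*s) * Real.sinh (τ*s)
          + a * τ * Real.sin (κ*s) * κ⁻¹ * Real.cosh (τ*s))) * hpy
        + (a * Real.sinh (τ*s) * Real.cos (κ*s)) * hinv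
    · linear_combination (-(Real.sinh (τ*s) * Real.sin (κ*s) * κ⁻¹)) * hpya
        + (-(a^2 * Real.sin (κ*s) * κ⁻¹ * Real.sinh (τ*s))) * hpy
        + (τ * Real.cosh (τ*s) * Real.cos (κ*s) - Real.sinh (τ*s) * Real.sin (κ*s) * κ) * hinv

lemma caseC2a_master (P Q : Fin 4 → ℝ) (hP : P ∈ AdS) (hQ : Q ∈ AdS) (τ κ a : ℝ)
    (hκ : κ ≠ 0) (ha : a^2 = τ^2 + κ^2)
    (h10 : zC τ κ a 1 = zmOf P Q) (h11 : wC τ κ a 1 = wmOf P Q) :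
    ∃ c : ℝ → Fin 4 → ℝ, ContDiff ℝ (⊤ : ℕ∞) c ∧ c 0 = P ∧ c 1 = Q ∧
      (∀ s ∈ Set.Icc (0:ℝ) 1, c s ∈ AdS) ∧
      (∀ s ∈ Set.Icc (0:ℝ) 1, gammaC c s = 0) := by
  apply master P Q hP hQ (zC τ κ a) (wC τ κ a) (contDiff_zC τ κ a) (contDiff_wC τ κ a)
    ?_ ?_ h10 h11 ?_ (hhorC τ κ a hκ ha)
  · norm_num [zC]
  · norm_num [wC]
  · intro s
    have hinv : κ * κ⁻¹ = 1 := mul_inv_cancel₀ hκ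
    have hpy := Real.cosh_sq_sub_sinh_sq (τ*s)
    have hpytrig := Real.sin_sq_add_cos_sq (κ*s)
    simp only [zC, wC, Complex.normSq_apply, Complex.add_re, Complex.add_im, Complex.mul_re,
      Complex.mul_im, Complex.I_re, Complex.I_im, Complex.ofReal_re, Complex.ofReal_im]
    linear_combination (Real.cos (κ*s)^2 + (a^2 - τ^2)*κ⁻¹^2*Real.sin (κ*s)^2) * hpy
      + (κ⁻¹^2*Real.sin (κ*s)^2) * ha + (Real.sin (κ*s)^2*(κ*κ⁻¹+1)) * hinv + hpytrig

lemma caseC2a (P Q : Fin 4 → ℝ) (hP : P ∈ AdS) (hQ : Q ∈ AdS)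
    (hzi : (zmOf P Q).im = 0) (hwr : (wmOf P Q).re = 0) :
    ∃ c : ℝ → Fin 4 → ℝ, ContDiff ℝ (⊤ : ℕ∞) c ∧ c 0 = P ∧ c 1 = Q ∧
      (∀ s ∈ Set.Icc (0:ℝ) 1, c s ∈ AdS) ∧
      (∀ s ∈ Set.Icc (0:ℝ) 1, gammaC c s = 0) := by
  have hrel : (zmOf P Q).re^2 - (wmOf P Q).im^2 = 1 := by
    have := normSq_zm hP hQ
    simp only [Complex.normSq_apply, hzi, hwr] at this
    nlinarith [this]
  have hπ := Real.pi_pos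
  by_cases hpos : 0 < (zmOf P Q).re
  · set τ := Real.arsinh ((wmOf P Q).im) with hτ
    have hκ : (2*π : ℝ) ≠ 0 := by positivity
    have ha : (Real.sqrt (τ^2 + (2*π)^2))^2 = τ^2 + (2*π)^2 :=
      Real.sq_sqrt (by positivity)
    have hcosτ : Real.cosh τ = (zmOf P Q).re := by
      rw [hτ, Real.cosh_arsinh]
      rw [show (1 + (wmOf P Q).im^2 : ℝ) = (zmOf P Q).re^2 by linarith]
      exact Real.sqrt_sq hpos.le
    have hsinτ : Real.sinh τ = (wmOf P Q).im := Real.sinh_arsinh _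
    apply caseC2a_master P Q hP hQ τ (2*π) (Real.sqrt (τ^2 + (2*π)^2)) hκ ha
    · refine Complex.ext ?_ ?_ <;>
        simp [zC, Real.cos_two_pi, Real.sin_two_pi, hcosτ, hzi]
    · refine Complex.ext ?_ ?_ <;>
        simp [wC, Real.cos_two_pi, Real.sin_two_pi, hsinτ, hwr]
  · have hneg : (zmOf P Q).re < 0 := by
      rcases lt_trichotomy ((zmOf P Q).re) 0 with h | h | h
      · exact h
      · exfalso; rw [h] at hrel; nlinarith
      · exact absurd h hpos
    set τ := Real.arsinh (-(wmOf P Q).im) with hτ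
    have hκ : (π : ℝ) ≠ 0 := by positivity
    have ha : (Real.sqrt (τ^2 + π^2))^2 = τ^2 + π^2 := Real.sq_sqrt (by positivity)
    have hcosτ : Real.cosh τ = -(zmOf P Q).re := by
      rw [hτ, Real.cosh_arsinh]
      rw [show (1 + (-(wmOf P Q).im)^2 : ℝ) = (-(zmOf P Q).re)^2 by nlinarith]
      exact Real.sqrt_sq (by linarith)
    have hsinτ : Real.sinh τ = -(wmOf P Q).im := Real.sinh_arsinh _
    apply caseC2a_master P Q hP hQ τ π (Real.sqrt (τ^2 + π^2)) hκ ha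
    · refine Complex.ext ?_ ?_ <;>
        simp [zC, Real.cos_pi, Real.sin_pi, hcosτ, hzi] <;> ring_nf <;> simp [hcosτ]
    · refine Complex.ext ?_ ?_ <;>
        simp [wC, Real.cos_pi, Real.sin_pi, hsinτ, hwr] <;> ring_nf <;> simp [hsinτ]

lemma zmOf_swap (P Q : Fin 4 → ℝ) : zmOf Q P = (starRingEnd ℂ) (zmOf P Q) := by
  simp only [zmOf, map_sub, map_mul, Complex.conj_conj]
  ring

lemma wmOf_swap (P Q : Fin 4 → ℝ) : wmOf Q P = -wmOf P Q := by
  simp only [wmOf]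
  ring

/-- any two points of AdS can be joined by a smooth curve on AdS that is
horizontal with respect to span{T,X} (γ ≡ 0 on [0,1]). -/
theorem exists_smooth_horizontal_TX_connecting (P Q : Fin 4 → ℝ)
    (hP : P ∈ AdS) (hQ : Q ∈ AdS) :
    ∃ c : ℝ → Fin 4 → ℝ, ContDiff ℝ (⊤ : ℕ∞) c ∧ c 0 = P ∧ c 1 = Q ∧
      (∀ s ∈ Set.Icc (0:ℝ) 1, c s ∈ AdS) ∧
      (∀ s ∈ Set.Icc (0:ℝ) 1, gammaC c s = 0) := by
  by_cases hw : wmOf P Q = 0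
  · exact caseA P Q hP hQ hw
  by_cases hre : (zmOf P Q * (starRingEnd ℂ) (wmOf P Q)).re = 0
  swap
  · exact caseB P Q hP hQ hw hre
  by_cases hre2 : (zmOf P Q * wmOf P Q).re = 0
  swap
  · -- reversal
    apply reverse P Q
    apply caseB Q P hQ hP
    · rw [wmOf_swap]
      simpa using hw
    · rw [zmOf_swap, wmOf_swap]
      intro h
      apply hre2
      have : ((starRingEnd ℂ) (zmOf P Q) * (starRingEnd ℂ) (-wmOf P Q)).re
          = ((starRingEnd ℂ) (zmOf P Q * -wmOf P Q)).re := by rw [map_mul]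
      rw [this, Complex.conj_re] at h
      simp only [mul_neg, Complex.neg_re, neg_eq_zero] at h
      exact h
  · -- both products have zero real part
    have e1 : (zmOf P Q).re * (wmOf P Q).re + (zmOf P Q).im * (wmOf P Q).im = 0 := by
      have : (zmOf P Q * (starRingEnd ℂ) (wmOf P Q)).re
          = (zmOf P Q).re * (wmOf P Q).re + (zmOf P Q).im * (wmOf P Q).im := by
        simp [Complex.mul_re, Complex.conj_re, Complex.conj_im]
      rw [← this]; exact hre
    have e2 : (zmOf P Q).re * (wmOf P Q).re - (zmOf P Q).im * (wmOf P Q).im = 0 := by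
      have : (zmOf P Q * wmOf P Q).re
          = (zmOf P Q).re * (wmOf P Q).re - (zmOf P Q).im * (wmOf P Q).im := by
        simp [Complex.mul_re]
      rw [← this]; exact hre2
    have hzrwr : (zmOf P Q).re * (wmOf P Q).re = 0 := by linarith
    have hziwi : (zmOf P Q).im * (wmOf P Q).im = 0 := by linarith
    by_cases hzr : (zmOf P Q).re = 0
    · -- zm imaginary; then zm.im ≠ 0, so wm.im = 0 : case C2b
      have hzi : (zmOf P Q).im ≠ 0 := by
        intro h0
        have := normSq_zm hP hQ
        simp only [Complex.normSq_apply, hzr, h0] at this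
        nlinarith [this, Complex.normSq_nonneg (wmOf P Q), Complex.normSq_apply (wmOf P Q)]
      have hwi : (wmOf P Q).im = 0 := by
        rcases mul_eq_zero.1 hziwi with h | h
        · exact absurd h hzi
        · exact h
      exact caseC2b P Q hP hQ hzr hwi
    · -- zm.re ≠ 0 : wm.re = 0, and zm.im = 0 (else wm = 0) : case C2a
      have hwr : (wmOf P Q).re = 0 := by
        rcases mul_eq_zero.1 hzrwr with h | h
        · exact absurd h hzr
        · exact h
      rcases mul_eq_zero.1 hziwi with h | h
      · exact caseC2a P Q hP hQ h hwr
      · exfalso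
        exact hw (Complex.ext hwr h)
end
end

section
/- Let c : I → ℝ⁴ be a C² curve and λ : I → ℝ a C¹ function satisfying the Euler–Lagrange system ẍ₁ = λ̇x₄ + 2λẋ₄, ẍ₂ = −λ̇x₃ − 2λẋ₃, ẍ₃ = −λ̇x₂ − 2λẋ₂, ẍ₄ = λ̇x₁ + 2λẋ₁. Then the horizontal coordinates satisfy α̇(s) = 2λ(s)β(s) and β̇(s) = 2λ(s)α(s) for all s ∈ I. -/
/-! The Euler–Lagrange system says c̈ = λ̇ Y(c) + 2λ Y(ċ). Since T and X are linear and
skew-adjoint for ⟨·,·⟩, the terms ⟨ċ, T ċ⟩ and ⟨ċ, X ċ⟩ vanish, so α̇ = ⟨c̈, T c⟩ and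
β̇ = ⟨c̈, X c⟩. Finally ⟨Y v, T x⟩ = ⟨v, X x⟩ and ⟨Y v, X x⟩ = ⟨v, T x⟩; with v = c the
right-hand sides vanish, which kills the λ̇ terms, and with v = ċ they give 2λβ and 2λα. -/

open Real Set

noncomputable section

theorem ip_add_left (u v w : Fin 4 → ℝ) : ip (u + v) w = ip u w + ip v w := by
  simp only [ip, Pi.add_apply]
  ring

theorem ip_smul_left (a : ℝ) (v w : Fin 4 → ℝ) : ip (a • v) w = a * ip v w := by
  simp only [ip, Pi.smul_apply, smul_eq_mul]
  ring

theorem ip_self_Tf (v : Fin 4 → ℝ) : ip v (Tf v) = 0 := by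
  simp only [ip, Tf, Fin.isValue, Matrix.cons_val_zero, Matrix.cons_val_one,
    Matrix.cons_val]
  ring

theorem ip_self_Xf (v : Fin 4 → ℝ) : ip v (Xf v) = 0 := by
  simp only [ip, Xf, Fin.isValue, Matrix.cons_val_zero, Matrix.cons_val_one,
    Matrix.cons_val]
  ring

theorem ip_Yf_Tf (v x : Fin 4 → ℝ) : ip (Yf v) (Tf x) = ip v (Xf x) := by
  simp only [ip, Yf, Tf, Xf, Fin.isValue, Matrix.cons_val_zero, Matrix.cons_val_one,
    Matrix.cons_val]
  ring

theorem ip_Yf_Xf (v x : Fin 4 → ℝ) : ip (Yf v) (Xf x) = ip v (Tf x) := by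
  simp only [ip, Yf, Xf, Tf, Fin.isValue, Matrix.cons_val_zero, Matrix.cons_val_one,
    Matrix.cons_val]
  ring

section Derivatives

variable {u v : ℝ → Fin 4 → ℝ} {u' v' : Fin 4 → ℝ} {s : ℝ}

theorem HasDerivAt.ip (hu : HasDerivAt u u' s) (hv : HasDerivAt v v' s) :
    HasDerivAt (fun t => ip (u t) (v t)) (ip u' (v s) + ip (u s) v') s := by
  have hu i := hasDerivAt_pi.1 hu i
  have hv i := hasDerivAt_pi.1 hv i
  unfold _root_.ip
  refine (((((hu 0).mul (hv 0)).neg.sub ((hu 1).mul (hv 1))).add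
    ((hu 2).mul (hv 2))).add ((hu 3).mul (hv 3))).congr_deriv ?_
  ring

theorem HasDerivAt.Tf_comp (hu : HasDerivAt u u' s) :
    HasDerivAt (fun t => Tf (u t)) (Tf u') s := by
  refine hasDerivAt_pi.2 fun i => ?_
  have hu i := hasDerivAt_pi.1 hu i
  fin_cases i
  exacts [(hu 1).neg, hu 0, hu 3, (hu 2).neg]

theorem HasDerivAt.Xf_comp (hu : HasDerivAt u u' s) :
    HasDerivAt (fun t => Xf (u t)) (Xf u') s := by
  refine hasDerivAt_pi.2 fun i => ?_
  have hu i := hasDerivAt_pi.1 hu i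
  fin_cases i
  exacts [hu 2, hu 3, hu 0, hu 1]

end Derivatives

theorem euler_lagrange_horizontal_coords_general (I : Set ℝ)
    (c : ℝ → Fin 4 → ℝ) (lam : ℝ → ℝ)
    (hc1 : ∀ s ∈ I, DifferentiableAt ℝ c s)
    (hc2 : ∀ s ∈ I, DifferentiableAt ℝ (deriv c) s)
    (hEL1 : ∀ s ∈ I, deriv (deriv c) s 0
      = deriv lam s * c s 3 + 2 * lam s * deriv c s 3)
    (hEL2 : ∀ s ∈ I, deriv (deriv c) s 1
      = -(deriv lam s * c s 2) - 2 * lam s * deriv c s 2)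
    (hEL3 : ∀ s ∈ I, deriv (deriv c) s 2
      = -(deriv lam s * c s 1) - 2 * lam s * deriv c s 1)
    (hEL4 : ∀ s ∈ I, deriv (deriv c) s 3
      = deriv lam s * c s 0 + 2 * lam s * deriv c s 0) :
    ∀ s ∈ I, deriv (alphaC c) s = 2 * lam s * betaC c s ∧
      deriv (betaC c) s = 2 * lam s * alphaC c s := by
  intro s hs
  have hc := (hc1 s hs).hasDerivAt
  have hd := (hc2 s hs).hasDerivAt
  have hacc : deriv (deriv c) s = deriv lam s • Yf (c s) + (2 * lam s) • Yf (deriv c s) := by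
    ext i
    fin_cases i <;>
      simp only [Fin.zero_eta, Fin.mk_one, Fin.reduceFinMk, Fin.isValue, Yf, Pi.add_apply,
        Pi.smul_apply, smul_eq_mul, Matrix.cons_val_zero, Matrix.cons_val_one, Matrix.cons_val,
        hEL1 s hs, hEL2 s hs, hEL3 s hs, hEL4 s hs] <;>
      ring
  constructor
  · unfold alphaC
    rw [(hd.ip hc.Tf_comp).deriv, hacc, ip_add_left, ip_smul_left, ip_smul_left,
      ip_Yf_Tf, ip_Yf_Tf, ip_self_Xf, ip_self_Tf, betaC]
    ring
  · unfold betaC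
    rw [(hd.ip hc.Xf_comp).deriv, hacc, ip_add_left, ip_smul_left, ip_smul_left,
      ip_Yf_Xf, ip_Yf_Xf, ip_self_Tf, ip_self_Xf, alphaC]
    ring

/-- along a C² solution of the Euler–Lagrange system
ẍ₁ = λ̇x₄ + 2λẋ₄, ẍ₂ = −λ̇x₃ − 2λẋ₃, ẍ₃ = −λ̇x₂ − 2λẋ₂, ẍ₄ = λ̇x₁ + 2λẋ₁
one has α̇ = 2λβ and β̇ = 2λα. -/
theorem euler_lagrange_horizontal_coords (I : Set ℝ) (hI : I.OrdConnected)
    (c : ℝ → Fin 4 → ℝ) (lam : ℝ → ℝ)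
    (hc1 : ∀ s ∈ I, DifferentiableAt ℝ c s)
    (hc2 : ∀ s ∈ I, DifferentiableAt ℝ (deriv c) s)
    (hlam : ∀ s ∈ I, DifferentiableAt ℝ lam s)
    (hEL1 : ∀ s ∈ I, deriv (deriv c) s 0
      = deriv lam s * c s 3 + 2 * lam s * deriv c s 3)
    (hEL2 : ∀ s ∈ I, deriv (deriv c) s 1
      = -(deriv lam s * c s 2) - 2 * lam s * deriv c s 2)
    (hEL3 : ∀ s ∈ I, deriv (deriv c) s 2
      = -(deriv lam s * c s 1) - 2 * lam s * deriv c s 1)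
    (hEL4 : ∀ s ∈ I, deriv (deriv c) s 3
      = deriv lam s * c s 0 + 2 * lam s * deriv c s 0) :
    ∀ s ∈ I, deriv (alphaC c) s = 2 * lam s * betaC c s ∧
      deriv (betaC c) s = 2 * lam s * alphaC c s :=
  euler_lagrange_horizontal_coords_general I c lam hc1 hc2 hEL1 hEL2 hEL3 hEL4
end
end

section
/- Let α, β : I → ℝ be C¹ functions and λ : I → ℝ a continuous function with α̇ = 2λβ and β̇ = 2λα on I, where 0 ∈ I. Then −α² + β² is constant on I. If moreover α(0)² > β(0)² and α(0) < 0, then, setting r = √(α(0)² − β(0)²) and Λ(s) = ∫₀ˢ λ(t) dt, there exists θ₀ ∈ ℝ such that α(s) = −r cosh(−2Λ(s) + θ₀) and β(s) = r sinh(−2Λ(s) + θ₀) for all s ∈ I. -/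
/-!
Along a solution, `α cosh 2Λ - β sinh 2Λ` and `β cosh 2Λ - α sinh 2Λ` have zero derivative, so
`(α, β)` is the hyperbolic rotation of `(α(0), β(0))` by the angle `2Λ`. Such rotations preserve
`-α² + β²`, and when `α(0) < 0` and `α(0)² > β(0)²` the initial vector is
`(-r cosh θ₀, r sinh θ₀)`, which the rotation sends to `(-r cosh (θ₀ - 2Λ), r sinh (θ₀ - 2Λ))`.
-/

open Real Set

theorem hasDerivWithinAt_intervalIntegral_uIcc {E : Type*} [NormedAddCommGroup E]
    [NormedSpace ℝ E] [CompleteSpace E] {f : ℝ → E} {a b x : ℝ}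
    (hf : ContinuousOn f (uIcc a b)) (hx : x ∈ uIcc a b) :
    HasDerivWithinAt (fun u => ∫ t in a..u, f t) (f x) (uIcc a b) x := by
  have : Fact (x ∈ uIcc a b) := ⟨hx⟩
  exact intervalIntegral.integral_hasDerivWithinAt_right
    (hf.mono (uIcc_subset_uIcc left_mem_uIcc hx)).intervalIntegrable
    (hf.stronglyMeasurableAtFilter_nhdsWithin measurableSet_uIcc x) (hf x hx)

section HyperbolicRotation

variable {s : Set ℝ} {f g φ φ' : ℝ → ℝ}

theorem hasDerivWithinAt_mul_cosh_sub_mul_sinh {x : ℝ} (hφ : HasDerivWithinAt φ (φ' x) s x)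
    (hf : HasDerivWithinAt f (φ' x * g x) s x) (hg : HasDerivWithinAt g (φ' x * f x) s x) :
    HasDerivWithinAt (fun y => f y * cosh (φ y) - g y * sinh (φ y)) 0 s x := by
  refine ((hf.mul hφ.cosh).sub (hg.mul hφ.sinh)).congr_deriv ?_
  ring

theorem Convex.mul_cosh_sub_mul_sinh_eq (hs : Convex ℝ s)
    (hφ : ∀ x ∈ s, HasDerivWithinAt φ (φ' x) s x)
    (hf : ∀ x ∈ s, HasDerivWithinAt f (φ' x * g x) s x)
    (hg : ∀ x ∈ s, HasDerivWithinAt g (φ' x * f x) s x) {x y : ℝ} (hx : x ∈ s) (hy : y ∈ s) :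
    f x * cosh (φ x) - g x * sinh (φ x) = f y * cosh (φ y) - g y * sinh (φ y) := by
  have h := hs.norm_image_sub_le_of_norm_hasDerivWithin_le (C := 0)
    (fun z hz => hasDerivWithinAt_mul_cosh_sub_mul_sinh (hφ z hz) (hf z hz) (hg z hz))
    (fun _ _ => by simp) hy hx
  simpa only [zero_mul, norm_le_zero_iff, sub_eq_zero] using h

theorem Convex.eq_mul_cosh_add_mul_sinh (hs : Convex ℝ s)
    (hφ : ∀ x ∈ s, HasDerivWithinAt φ (φ' x) s x)
    (hf : ∀ x ∈ s, HasDerivWithinAt f (φ' x * g x) s x)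
    (hg : ∀ x ∈ s, HasDerivWithinAt g (φ' x * f x) s x) {x y : ℝ} (hx : x ∈ s) (hy : y ∈ s) :
    f x = f y * cosh (φ x - φ y) + g y * sinh (φ x - φ y) := by
  have hfg := hs.mul_cosh_sub_mul_sinh_eq hφ hf hg hx hy
  have hgf := hs.mul_cosh_sub_mul_sinh_eq hφ hg hf hx hy
  rw [cosh_sub, sinh_sub]
  linear_combination cosh (φ x) * hfg + sinh (φ x) * hgf - f x * cosh_sq_sub_sinh_sq (φ x)

end HyperbolicRotation

theorem Real.exists_eq_neg_sqrt_mul_cosh_and_eq_sqrt_mul_sinh {a b : ℝ} (ha : a < 0)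
    (hba : b ^ 2 < a ^ 2) :
    ∃ θ : ℝ, a = -√(a ^ 2 - b ^ 2) * cosh θ ∧ b = √(a ^ 2 - b ^ 2) * sinh θ := by
  set r := √(a ^ 2 - b ^ 2)
  have hr2 : r ^ 2 = a ^ 2 - b ^ 2 := sq_sqrt (by linarith)
  have hr : 0 < r := sqrt_pos.mpr (by linarith)
  have hcosh : 1 + (b / r) ^ 2 = (-a / r) ^ 2 := by
    field_simp
    linarith
  refine ⟨arsinh (b / r), ?_, ?_⟩
  · rw [cosh_arsinh, hcosh, sqrt_sq (div_nonneg (by linarith) hr.le)]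
    field_simp
  · rw [sinh_arsinh]
    field_simp

theorem Set.OrdConnected.eq_mul_cosh_integral_add_mul_sinh_integral {I : Set ℝ}
    (hI : I.OrdConnected) {f g lam : ℝ → ℝ} {a s : ℝ} (ha : a ∈ I) (hs : s ∈ I)
    (hf : ∀ x ∈ I, HasDerivAt f (lam x * g x) x) (hg : ∀ x ∈ I, HasDerivAt g (lam x * f x) x)
    (hlam : ContinuousOn lam I) :
    f s = f a * cosh (∫ t in a..s, lam t) + g a * sinh (∫ t in a..s, lam t) := by
  have hJ : uIcc a s ⊆ I := hI.uIcc_subset ha hs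
  have hΛ : ∀ x ∈ uIcc a s, HasDerivWithinAt (fun u => ∫ t in a..u, lam t) (lam x) (uIcc a s) x :=
    fun x hx => hasDerivWithinAt_intervalIntegral_uIcc (hlam.mono hJ) hx
  simpa using (convex_uIcc a s).eq_mul_cosh_add_mul_sinh hΛ
    (fun x hx => (hf x (hJ hx)).hasDerivWithinAt) (fun x hx => (hg x (hJ hx)).hasDerivWithinAt)
    right_mem_uIcc left_mem_uIcc

/-- for the system α̇ = 2λβ, β̇ = 2λα on an interval I ∋ 0, the quantity
−α² + β² is constant; if α(0)² > β(0)² and α(0) < 0 then, with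
r = √(α(0)² − β(0)²) and Λ(s) = ∫₀ˢ λ, one has α = −r cosh(−2Λ + θ₀) and
β = r sinh(−2Λ + θ₀) for some θ₀. -/
theorem ode_hyperbolic_solution (I : Set ℝ) (hI : I.OrdConnected) (h0 : (0:ℝ) ∈ I)
    (α β lam : ℝ → ℝ)
    (hα : ∀ s ∈ I, HasDerivAt α (2 * lam s * β s) s)
    (hβ : ∀ s ∈ I, HasDerivAt β (2 * lam s * α s) s)
    (hlam : ContinuousOn lam I) :
    (∀ s ∈ I, -(α s)^2 + (β s)^2 = -(α 0)^2 + (β 0)^2) ∧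
    ((β 0)^2 < (α 0)^2 → α 0 < 0 →
      ∃ θ₀ : ℝ, ∀ s ∈ I,
        α s = -Real.sqrt ((α 0)^2 - (β 0)^2)
            * Real.cosh (-2 * (∫ t in (0:ℝ)..s, lam t) + θ₀) ∧
        β s = Real.sqrt ((α 0)^2 - (β 0)^2)
            * Real.sinh (-2 * (∫ t in (0:ℝ)..s, lam t) + θ₀)) := by
  set Λ : ℝ → ℝ := fun s => ∫ t in (0:ℝ)..s, lam t
  have hrot : ∀ s ∈ I, α s = α 0 * cosh (2 * Λ s) + β 0 * sinh (2 * Λ s) ∧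
      β s = β 0 * cosh (2 * Λ s) + α 0 * sinh (2 * Λ s) := by
    intro s hs
    have h2lam : ContinuousOn (fun t => 2 * lam t) I := continuousOn_const.mul hlam
    simp only [Λ, ← intervalIntegral.integral_const_mul]
    exact ⟨hI.eq_mul_cosh_integral_add_mul_sinh_integral h0 hs hα hβ h2lam,
      hI.eq_mul_cosh_integral_add_mul_sinh_integral h0 hs hβ hα h2lam⟩
  refine ⟨fun s hs => ?_, fun hlt hneg => ?_⟩
  · obtain ⟨hαs, hβs⟩ := hrot s hs
    rw [hαs, hβs]
    linear_combination (-(α 0) ^ 2 + (β 0) ^ 2) * cosh_sq_sub_sinh_sq (2 * Λ s)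
  · obtain ⟨θ₀, hα0, hβ0⟩ := exists_eq_neg_sqrt_mul_cosh_and_eq_sqrt_mul_sinh hneg hlt
    refine ⟨θ₀, fun s hs => ?_⟩
    obtain ⟨hαs, hβs⟩ := hrot s hs
    have hangle : -2 * Λ s + θ₀ = θ₀ - 2 * Λ s := by ring
    rw [hangle, cosh_sub, sinh_sub]
    constructor
    · linear_combination hαs + cosh (2 * Λ s) * hα0 + sinh (2 * Λ s) * hβ0
    · linear_combination hβs + cosh (2 * Λ s) * hβ0 + sinh (2 * Λ s) * hα0
end

section
/- For any two points P, Q ∈ H there exists a smooth curve c : [0,1] → H with c(0) = P and c(1) = Q which is horizontal with respect to the sub-Riemannian distribution span{X,Y}, i.e. α(s) = x₂ẋ₁ − x₁ẋ₂ + x₄ẋ₃ − x₃ẋ₄ = 0 for all s ∈ [0,1]. -/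
open Real Set

noncomputable section

/-! ### Auxiliary: split-quaternion multiplication -/

/-- Split quaternion multiplication on ℝ⁴. -/
def pmul (a b : Fin 4 → ℝ) : Fin 4 → ℝ :=
  ![a 0 * b 0 - a 1 * b 1 + a 2 * b 2 + a 3 * b 3,
    a 0 * b 1 + a 1 * b 0 - a 2 * b 3 + a 3 * b 2,
    a 0 * b 2 + a 2 * b 0 - a 1 * b 3 + a 3 * b 1,
    a 0 * b 3 + a 3 * b 0 + a 1 * b 2 - a 2 * b 1]

/-- Split quaternion conjugation. -/
def cj (p : Fin 4 → ℝ) : Fin 4 → ℝ := ![p 0, -p 1, -p 2, -p 3]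

lemma ip_pmul (p a b : Fin 4 → ℝ) :
    ip (pmul p a) (pmul p b) = -(ip p p) * ip a b := by
  simp [ip, pmul]; ring

lemma Tf_pmul (p q : Fin 4 → ℝ) : Tf (pmul p q) = pmul p (Tf q) := by
  funext i; fin_cases i <;> (simp [Tf, pmul]; ring)

lemma ip_cj (p : Fin 4 → ℝ) : ip (cj p) (cj p) = ip p p := by
  simp [ip, cj]

lemma pmul_cj (p q : Fin 4 → ℝ) (hp : ip p p = -1) :
    pmul p (pmul (cj p) q) = q := by
  have h : p 0 ^ 2 + p 1 ^ 2 - p 2 ^ 2 - p 3 ^ 2 = 1 := by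
    simp [ip] at hp; nlinarith [hp]
  funext i; fin_cases i
  · simp [pmul, cj]; linear_combination (q 0) * h
  · simp [pmul, cj]; linear_combination (q 1) * h
  · simp [pmul, cj]; linear_combination (q 2) * h
  · simp [pmul, cj]; linear_combination (q 3) * h

lemma pmul_contDiff (p : Fin 4 → ℝ) {f : ℝ → Fin 4 → ℝ} (hf : ContDiff ℝ (⊤ : ℕ∞) f) :
    ContDiff ℝ (⊤ : ℕ∞) (fun s => pmul p (f s)) := by
  have h0 : ContDiff ℝ (⊤ : ℕ∞) (fun s => f s 0) := (contDiff_pi.1 hf) 0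
  have h1 : ContDiff ℝ (⊤ : ℕ∞) (fun s => f s 1) := (contDiff_pi.1 hf) 1
  have h2 : ContDiff ℝ (⊤ : ℕ∞) (fun s => f s 2) := (contDiff_pi.1 hf) 2
  have h3 : ContDiff ℝ (⊤ : ℕ∞) (fun s => f s 3) := (contDiff_pi.1 hf) 3
  rw [contDiff_pi]; intro i; fin_cases i
  · simp only [pmul, Matrix.cons_val_zero]
    exact (((contDiff_const.mul h0).sub (contDiff_const.mul h1)).add
      (contDiff_const.mul h2)).add (contDiff_const.mul h3)
  · simp only [pmul, Matrix.cons_val_one, Matrix.head_cons]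
    exact (((contDiff_const.mul h1).add (contDiff_const.mul h0)).sub
      (contDiff_const.mul h3)).add (contDiff_const.mul h2)
  · simp [pmul]
    exact (((contDiff_const.mul h2).add (contDiff_const.mul h0)).sub
      (contDiff_const.mul h3)).add (contDiff_const.mul h1)
  · simp [pmul]
    exact (((contDiff_const.mul h3).add (contDiff_const.mul h0)).add
      (contDiff_const.mul h2)).sub (contDiff_const.mul h1)

lemma hasDerivAt_pmul_left (p : Fin 4 → ℝ) {f : ℝ → Fin 4 → ℝ} {f' : Fin 4 → ℝ} {s : ℝ}
    (hf : HasDerivAt f f' s) : HasDerivAt (fun t => pmul p (f t)) (pmul p f') s := by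
  rw [hasDerivAt_pi] at hf ⊢
  have h0 := hf 0; have h1 := hf 1; have h2 := hf 2; have h3 := hf 3
  intro i; fin_cases i
  · simpa [pmul, Pi.add_def, Pi.sub_def] using (((h0.const_mul (p 0)).sub (h1.const_mul (p 1))).add
      (h2.const_mul (p 2))).add (h3.const_mul (p 3))
  · simpa [pmul, Pi.add_def, Pi.sub_def] using (((h1.const_mul (p 0)).add (h0.const_mul (p 1))).sub
      (h3.const_mul (p 2))).add (h2.const_mul (p 3))
  · simpa [pmul, Pi.add_def, Pi.sub_def] using (((h2.const_mul (p 0)).add (h0.const_mul (p 2))).sub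
      (h3.const_mul (p 1))).add (h1.const_mul (p 3))
  · simpa [pmul, Pi.add_def, Pi.sub_def] using (((h3.const_mul (p 0)).add (h0.const_mul (p 3))).add
      (h2.const_mul (p 1))).sub (h1.const_mul (p 2))

/-! ### Auxiliary: the explicit horizontal curve from the identity -/

def hF (m s : ℝ) : ℝ := s * (1 + m - s)
def JF (m s : ℝ) : ℝ := (1 + m) ^ 2 * s ^ 3 / 3 - (1 + m) * s ^ 4 / 2 + s ^ 5 / 5
def IF (m : ℝ) : ℝ := JF m 1
def c1F (m θ : ℝ) : ℝ := -θ / IF m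
def aF (m θ s : ℝ) : ℝ := -c1F m θ * JF m s
def pF (m θ φ s : ℝ) : ℝ := φ - c1F m θ * (1 + IF m) + c1F m θ * (s + JF m s)
def CF (m s : ℝ) : ℝ := Real.sqrt (1 + hF m s ^ 2)

/-- The horizontal curve starting at the identity (1,0,0,0). -/
def gF (m θ φ s : ℝ) : Fin 4 → ℝ :=
  ![CF m s * Real.cos (aF m θ s), CF m s * Real.sin (aF m θ s),
    hF m s * Real.cos (pF m θ φ s), hF m s * Real.sin (pF m θ φ s)]

lemma IF_pos (m : ℝ) : 0 < IF m := by
  unfold IF JF; nlinarith [sq_nonneg (1 + m - 3 / 4)]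

lemma CF_sq (m s : ℝ) : CF m s ^ 2 = 1 + hF m s ^ 2 :=
  Real.sq_sqrt (by positivity)

lemma JF_hasDeriv (m s : ℝ) : HasDerivAt (JF m) (hF m s ^ 2) s := by
  have H : HasDerivAt (JF m)
      ((1 + m) ^ 2 * ((3 : ℕ) * s ^ (3 - 1)) / 3 - (1 + m) * ((4 : ℕ) * s ^ (4 - 1)) / 2
        + (5 : ℕ) * s ^ (5 - 1) / 5) s := by
    exact ((((hasDerivAt_pow 3 s).const_mul ((1 + m) ^ 2)).div_const 3).sub
      (((hasDerivAt_pow 4 s).const_mul (1 + m)).div_const 2)).add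
      ((hasDerivAt_pow 5 s).div_const 5)
  convert H using 1
  unfold hF; push_cast; ring

lemma hF_hasDeriv (m s : ℝ) : HasDerivAt (hF m) (1 + m - 2 * s) s := by
  have H : HasDerivAt (fun x : ℝ => x * (1 + m - x)) (1 * (1 + m - s) + s * (0 - 1)) s :=
    (hasDerivAt_id s).mul ((hasDerivAt_const s (1 + m)).sub (hasDerivAt_id s))
  convert H using 1
  · rfl
  · ring

lemma aF_hasDeriv (m θ s : ℝ) : HasDerivAt (aF m θ) (-c1F m θ * hF m s ^ 2) s :=
  (JF_hasDeriv m s).const_mul _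

lemma pF_hasDeriv (m θ φ s : ℝ) :
    HasDerivAt (pF m θ φ) (c1F m θ * (1 + hF m s ^ 2)) s := by
  have H : HasDerivAt (fun x : ℝ => x + JF m x) (1 + hF m s ^ 2) s :=
    (hasDerivAt_id s).add (JF_hasDeriv m s)
  exact (H.const_mul _).const_add _

lemma hF_contDiff (m : ℝ) : ContDiff ℝ (⊤ : ℕ∞) (hF m) := by
  unfold hF; fun_prop

lemma JF_contDiff (m : ℝ) : ContDiff ℝ (⊤ : ℕ∞) (JF m) := by
  unfold JF
  exact (((contDiff_const.mul (contDiff_id.pow 3)).div_const 3).sub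
    ((contDiff_const.mul (contDiff_id.pow 4)).div_const 2)).add
    ((contDiff_id.pow 5).div_const 5)

lemma aF_contDiff (m θ : ℝ) : ContDiff ℝ (⊤ : ℕ∞) (aF m θ) := by
  unfold aF; exact contDiff_const.mul (JF_contDiff m)

lemma pF_contDiff (m θ φ : ℝ) : ContDiff ℝ (⊤ : ℕ∞) (pF m θ φ) := by
  unfold pF
  exact contDiff_const.add (contDiff_const.mul (contDiff_id.add (JF_contDiff m)))

lemma CF_contDiff (m : ℝ) : ContDiff ℝ (⊤ : ℕ∞) (CF m) := by
  unfold CF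
  exact ContDiff.sqrt (by have := hF_contDiff m; fun_prop) (fun x => by positivity)

lemma CF_hasDeriv (m s : ℝ) : HasDerivAt (CF m) (deriv (CF m) s) s :=
  (((CF_contDiff m).differentiable (by simp)) s).hasDerivAt

lemma gF_contDiff (m θ φ : ℝ) : ContDiff ℝ (⊤ : ℕ∞) (gF m θ φ) := by
  rw [contDiff_pi]; intro i; fin_cases i
  · simp only [gF, Matrix.cons_val_zero]
    exact (CF_contDiff m).mul (aF_contDiff m θ).cos
  · simp only [gF, Matrix.cons_val_one, Matrix.head_cons]
    exact (CF_contDiff m).mul (aF_contDiff m θ).sin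
  · simp [gF]
    exact (hF_contDiff m).mul (pF_contDiff m θ φ).cos
  · simp [gF]
    exact (hF_contDiff m).mul (pF_contDiff m θ φ).sin

lemma gF_mem (m θ φ s : ℝ) : ip (gF m θ φ s) (gF m θ φ s) = -1 := by
  simp [ip, gF]
  linear_combination (-(CF m s ^ 2)) * Real.sin_sq_add_cos_sq (aF m θ s)
    + (hF m s ^ 2) * Real.sin_sq_add_cos_sq (pF m θ φ s) - CF_sq m s

lemma gF_zero (m θ φ : ℝ) : gF m θ φ 0 = ![1, 0, 0, 0] := by
  have h0 : hF m 0 = 0 := by unfold hF; ring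
  have hJ0 : JF m 0 = 0 := by unfold JF; ring
  have ha0 : aF m θ 0 = 0 := by unfold aF; rw [hJ0]; ring
  have hC0 : CF m 0 = 1 := by unfold CF; rw [h0]; norm_num
  funext i; fin_cases i <;> simp [gF, h0, ha0, hC0]

/-- The derivative of gF. -/
def gdF (m θ φ s : ℝ) : Fin 4 → ℝ :=
  ![deriv (CF m) s * Real.cos (aF m θ s) +
      CF m s * (-Real.sin (aF m θ s) * (-c1F m θ * hF m s ^ 2)),
    deriv (CF m) s * Real.sin (aF m θ s) +
      CF m s * (Real.cos (aF m θ s) * (-c1F m θ * hF m s ^ 2)),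
    (1 + m - 2 * s) * Real.cos (pF m θ φ s) +
      hF m s * (-Real.sin (pF m θ φ s) * (c1F m θ * (1 + hF m s ^ 2))),
    (1 + m - 2 * s) * Real.sin (pF m θ φ s) +
      hF m s * (Real.cos (pF m θ φ s) * (c1F m θ * (1 + hF m s ^ 2)))]

lemma gF_hasDeriv (m θ φ s : ℝ) : HasDerivAt (gF m θ φ) (gdF m θ φ s) s := by
  rw [hasDerivAt_pi]
  intro i; fin_cases i
  · simpa [gF, gdF, Pi.mul_def] using (CF_hasDeriv m s).mul (aF_hasDeriv m θ s).cos
  · simpa [gF, gdF, Pi.mul_def] using (CF_hasDeriv m s).mul (aF_hasDeriv m θ s).sin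
  · simpa [gF, gdF, Pi.mul_def] using (hF_hasDeriv m s).mul (pF_hasDeriv m θ φ s).cos
  · simpa [gF, gdF, Pi.mul_def] using (hF_hasDeriv m s).mul (pF_hasDeriv m θ φ s).sin

lemma gF_horizontal (m θ φ s : ℝ) : ip (gdF m θ φ s) (Tf (gF m θ φ s)) = 0 := by
  simp [ip, gdF, gF, Tf]
  linear_combination (CF m s ^ 2 * c1F m θ * hF m s ^ 2) * Real.sin_sq_add_cos_sq (aF m θ s)
    - (hF m s ^ 2 * c1F m θ * (1 + hF m s ^ 2)) * Real.sin_sq_add_cos_sq (pF m θ φ s)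
    + (c1F m θ * hF m s ^ 2) * CF_sq m s

/-- any two points of AdS can be joined by a smooth curve on AdS that is
horizontal with respect to the sub-Riemannian distribution span{X,Y} (α ≡ 0). -/
theorem exists_smooth_horizontal_XY_connecting (P Q : Fin 4 → ℝ)
    (hP : P ∈ AdS) (hQ : Q ∈ AdS) :
    ∃ c : ℝ → Fin 4 → ℝ, ContDiff ℝ (⊤ : ℕ∞) c ∧ c 0 = P ∧ c 1 = Q ∧
      (∀ s ∈ Set.Icc (0:ℝ) 1, c s ∈ AdS) ∧
      (∀ s ∈ Set.Icc (0:ℝ) 1, alphaC c s = 0) := by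
  have hP' : ip P P = -1 := hP
  have hQ' : ip Q Q = -1 := hQ
  set Q' : Fin 4 → ℝ := pmul (cj P) Q with hQ'def
  have hQ'AdS : ip Q' Q' = -1 := by
    rw [hQ'def, ip_pmul, ip_cj, hP', hQ']; norm_num
  set z : ℂ := ⟨Q' 0, Q' 1⟩ with hzdef
  set w : ℂ := ⟨Q' 2, Q' 3⟩ with hwdef
  set m : ℝ := ‖w‖ with hmdef
  set θ : ℝ := Complex.arg z with hθdef
  set φ : ℝ := Complex.arg w with hφdef
  have hz2 : ‖z‖ ^ 2 = 1 + m ^ 2 := by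
    rw [hmdef, Complex.sq_norm, Complex.sq_norm, hzdef, hwdef, Complex.normSq_mk,
      Complex.normSq_mk]
    simp only [ip] at hQ'AdS
    linear_combination -hQ'AdS
  refine ⟨fun s => pmul P (gF m θ φ s), ?_, ?_, ?_, ?_, ?_⟩
  · exact pmul_contDiff P (gF_contDiff m θ φ)
  · show pmul P (gF m θ φ 0) = P
    rw [gF_zero]
    funext i; fin_cases i <;> simp [pmul]
  · have hh1 : hF m 1 = m := by unfold hF; ring
    have ha1 : aF m θ 1 = θ := by
      unfold aF
      rw [show JF m 1 = IF m from rfl]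
      unfold c1F
      field_simp [ne_of_gt (IF_pos m)]
    have hp1 : pF m θ φ 1 = φ := by
      unfold pF
      rw [show JF m 1 = IF m from rfl]; ring
    have hC1 : CF m 1 = ‖z‖ := by
      unfold CF
      rw [hh1, ← hz2, Real.sqrt_sq (norm_nonneg z)]
    have hg1 : gF m θ φ 1 = Q' := by
      funext i; fin_cases i
      · show CF m 1 * Real.cos (aF m θ 1) = Q' 0
        rw [hC1, ha1, hθdef]
        simpa [hzdef] using Complex.norm_mul_cos_arg z
      · show CF m 1 * Real.sin (aF m θ 1) = Q' 1
        rw [hC1, ha1, hθdef]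
        simpa [hzdef] using Complex.norm_mul_sin_arg z
      · show hF m 1 * Real.cos (pF m θ φ 1) = Q' 2
        rw [hh1, hp1, hmdef, hφdef]
        simpa [hwdef] using Complex.norm_mul_cos_arg w
      · show hF m 1 * Real.sin (pF m θ φ 1) = Q' 3
        rw [hh1, hp1, hmdef, hφdef]
        simpa [hwdef] using Complex.norm_mul_sin_arg w
    show pmul P (gF m θ φ 1) = Q
    rw [hg1, hQ'def]
    exact pmul_cj P Q hP'
  · intro s _
    show ip (pmul P (gF m θ φ s)) (pmul P (gF m θ φ s)) = -1
    rw [ip_pmul, hP', gF_mem]; norm_num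
  · intro s _
    show ip (deriv (fun t => pmul P (gF m θ φ t)) s) (Tf (pmul P (gF m θ φ s))) = 0
    have hc : HasDerivAt (fun t => pmul P (gF m θ φ t)) (pmul P (gdF m θ φ s)) s :=
      hasDerivAt_pmul_left P (gF_hasDeriv m θ φ s)
    rw [hc.deriv, Tf_pmul, ip_pmul, hP', gF_horizontal]
    ring
end
end

section
/- Let φ₀ ≠ φ₁ and ψ₀, ψ₁, θ₀ be real numbers with cosh 2θ₀ = (ψ₁ − ψ₀)/(φ₀ − φ₁). Then the curve c(s) = Φ(φ₀ + s(φ₁ − φ₀), ψ₀ + s(ψ₁ − ψ₀), θ₀), s ∈ [0,1], which has constant θ-coordinate θ₀, is a smooth curve on H joining P = Φ(φ₀,ψ₀,θ₀) to Q = Φ(φ₁,ψ₁,θ₀) that is horizontal with respect to the distribution span{X,Y} (α ≡ 0 along c). -/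
open Real Set

noncomputable section

lemma curve_hasDerivAt (φ₀ φ₁ ψ₀ ψ₁ θ₀ : ℝ) (s : ℝ) :
    HasDerivAt (fun t : ℝ => Phi (φ₀ + t * (φ₁ - φ₀)) (ψ₀ + t * (ψ₁ - ψ₀)) θ₀)
      (![-Real.sin (((φ₀ + s * (φ₁ - φ₀)) + (ψ₀ + s * (ψ₁ - ψ₀)))/2)
            * (((φ₁ - φ₀) + (ψ₁ - ψ₀))/2) * Real.cosh θ₀,
         Real.cos (((φ₀ + s * (φ₁ - φ₀)) + (ψ₀ + s * (ψ₁ - ψ₀)))/2)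
            * (((φ₁ - φ₀) + (ψ₁ - ψ₀))/2) * Real.cosh θ₀,
         -Real.sin (((φ₀ + s * (φ₁ - φ₀)) - (ψ₀ + s * (ψ₁ - ψ₀)))/2)
            * (((φ₁ - φ₀) - (ψ₁ - ψ₀))/2) * Real.sinh θ₀,
         Real.cos (((φ₀ + s * (φ₁ - φ₀)) - (ψ₀ + s * (ψ₁ - ψ₀)))/2)
            * (((φ₁ - φ₀) - (ψ₁ - ψ₀))/2) * Real.sinh θ₀]) s := by
  have hu : HasDerivAt (fun t : ℝ => ((φ₀ + t * (φ₁ - φ₀)) + (ψ₀ + t * (ψ₁ - ψ₀)))/2)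
      (((φ₁ - φ₀) + (ψ₁ - ψ₀))/2) s := by
    simpa using ((((hasDerivAt_id s).mul_const (φ₁ - φ₀)).const_add φ₀).add
      (((hasDerivAt_id s).mul_const (ψ₁ - ψ₀)).const_add ψ₀)).div_const 2
  have hv : HasDerivAt (fun t : ℝ => ((φ₀ + t * (φ₁ - φ₀)) - (ψ₀ + t * (ψ₁ - ψ₀)))/2)
      (((φ₁ - φ₀) - (ψ₁ - ψ₀))/2) s := by
    simpa using ((((hasDerivAt_id s).mul_const (φ₁ - φ₀)).const_add φ₀).sub
      (((hasDerivAt_id s).mul_const (ψ₁ - ψ₀)).const_add ψ₀)).div_const 2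
  rw [hasDerivAt_pi]
  intro i
  fin_cases i <;> simp only [Phi, Matrix.cons_val_zero, Matrix.cons_val_one, Matrix.head_cons,
    Matrix.cons_val_two, Matrix.cons_val_three, Matrix.tail_cons, Fin.isValue]
  · exact (hu.cos.mul_const (Real.cosh θ₀))
  · simpa [mul_comm] using (hu.sin.mul_const (Real.cosh θ₀))
  · exact (hv.cos.mul_const (Real.sinh θ₀))
  · simpa [mul_comm] using (hv.sin.mul_const (Real.sinh θ₀))

/-- if cosh 2θ₀ = (ψ₁ − ψ₀)/(φ₀ − φ₁) then the linear-parameter curve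
c(s) = Φ(φ₀ + s(φ₁−φ₀), ψ₀ + s(ψ₁−ψ₀), θ₀) is a smooth curve on AdS joining
Φ(φ₀,ψ₀,θ₀) to Φ(φ₁,ψ₁,θ₀) that is horizontal for span{X,Y} (α ≡ 0). -/
theorem horizontal_XY_curve_const_theta (φ₀ φ₁ ψ₀ ψ₁ θ₀ : ℝ) (hφ : φ₀ ≠ φ₁)
    (hc : Real.cosh (2 * θ₀) = (ψ₁ - ψ₀) / (φ₀ - φ₁)) :
    ContDiff ℝ (⊤ : ℕ∞) (fun s : ℝ => Phi (φ₀ + s * (φ₁ - φ₀)) (ψ₀ + s * (ψ₁ - ψ₀)) θ₀) ∧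
    (fun s : ℝ => Phi (φ₀ + s * (φ₁ - φ₀)) (ψ₀ + s * (ψ₁ - ψ₀)) θ₀) 0
      = Phi φ₀ ψ₀ θ₀ ∧
    (fun s : ℝ => Phi (φ₀ + s * (φ₁ - φ₀)) (ψ₀ + s * (ψ₁ - ψ₀)) θ₀) 1
      = Phi φ₁ ψ₁ θ₀ ∧
    (∀ s ∈ Set.Icc (0:ℝ) 1,
      Phi (φ₀ + s * (φ₁ - φ₀)) (ψ₀ + s * (ψ₁ - ψ₀)) θ₀ ∈ AdS) ∧
    (∀ s ∈ Set.Icc (0:ℝ) 1,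
      alphaC (fun t : ℝ => Phi (φ₀ + t * (φ₁ - φ₀)) (ψ₀ + t * (ψ₁ - ψ₀)) θ₀) s = 0) := by
  have hne : φ₀ - φ₁ ≠ 0 := sub_ne_zero.mpr hφ
  have h1 : (φ₀ - φ₁) * Real.cosh (2 * θ₀) = ψ₁ - ψ₀ := by
    rw [hc]; field_simp
  have h2 : (φ₀ - φ₁) * (Real.cosh θ₀ ^ 2 + Real.sinh θ₀ ^ 2) = ψ₁ - ψ₀ := by
    rw [← Real.cosh_two_mul]; exact h1
  refine ⟨?_, ?_, ?_, ?_, ?_⟩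
  · have hu : ContDiff ℝ (⊤ : ℕ∞) (fun x : ℝ => ((φ₀ + x * (φ₁ - φ₀)) + (ψ₀ + x * (ψ₁ - ψ₀)))/2) := by
      exact ((contDiff_const.add (contDiff_id.mul contDiff_const)).add
        (contDiff_const.add (contDiff_id.mul contDiff_const))).div_const 2
    have hv : ContDiff ℝ (⊤ : ℕ∞) (fun x : ℝ => ((φ₀ + x * (φ₁ - φ₀)) - (ψ₀ + x * (ψ₁ - ψ₀)))/2) := by
      exact ((contDiff_const.add (contDiff_id.mul contDiff_const)).sub
        (contDiff_const.add (contDiff_id.mul contDiff_const))).div_const 2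
    apply contDiff_pi.mpr
    intro i
    fin_cases i
    · show ContDiff ℝ (⊤ : ℕ∞) fun x : ℝ =>
        Real.cos (((φ₀ + x * (φ₁ - φ₀)) + (ψ₀ + x * (ψ₁ - ψ₀)))/2) * Real.cosh θ₀
      exact (Real.contDiff_cos.comp hu).mul contDiff_const
    · show ContDiff ℝ (⊤ : ℕ∞) fun x : ℝ =>
        Real.sin (((φ₀ + x * (φ₁ - φ₀)) + (ψ₀ + x * (ψ₁ - ψ₀)))/2) * Real.cosh θ₀
      exact (Real.contDiff_sin.comp hu).mul contDiff_const
    · show ContDiff ℝ (⊤ : ℕ∞) fun x : ℝ =>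
        Real.cos (((φ₀ + x * (φ₁ - φ₀)) - (ψ₀ + x * (ψ₁ - ψ₀)))/2) * Real.sinh θ₀
      exact (Real.contDiff_cos.comp hv).mul contDiff_const
    · show ContDiff ℝ (⊤ : ℕ∞) fun x : ℝ =>
        Real.sin (((φ₀ + x * (φ₁ - φ₀)) - (ψ₀ + x * (ψ₁ - ψ₀)))/2) * Real.sinh θ₀
      exact (Real.contDiff_sin.comp hv).mul contDiff_const
  · simp [Phi]
  · funext i; fin_cases i <;> simp [Phi]
  · intro s _
    simp only [AdS, ip, Phi, Set.mem_setOf_eq, Matrix.cons_val_zero, Matrix.cons_val_one,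
      Matrix.head_cons, Matrix.cons_val_two, Matrix.cons_val_three, Matrix.tail_cons]
    set u := ((φ₀ + s * (φ₁ - φ₀)) + (ψ₀ + s * (ψ₁ - ψ₀)))/2
    set v := ((φ₀ + s * (φ₁ - φ₀)) - (ψ₀ + s * (ψ₁ - ψ₀)))/2
    linear_combination (-(Real.cosh θ₀)^2) * Real.sin_sq_add_cos_sq u
      + (Real.sinh θ₀)^2 * Real.sin_sq_add_cos_sq v - Real.cosh_sq_sub_sinh_sq θ₀
  · intro s _
    have hd := curve_hasDerivAt φ₀ φ₁ ψ₀ ψ₁ θ₀ s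
    simp only [alphaC, hd.deriv]
    simp only [ip, Tf, Phi, Matrix.cons_val_zero, Matrix.cons_val_one, Matrix.head_cons,
      Matrix.cons_val_two, Matrix.cons_val_three, Matrix.tail_cons, Fin.isValue]
    set u := ((φ₀ + s * (φ₁ - φ₀)) + (ψ₀ + s * (ψ₁ - ψ₀)))/2
    set v := ((φ₀ + s * (φ₁ - φ₀)) - (ψ₀ + s * (ψ₁ - ψ₀)))/2
    linear_combination (-(((φ₁ - φ₀) + (ψ₁ - ψ₀))/2) * (Real.cosh θ₀)^2) * Real.sin_sq_add_cos_sq u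
      + (-(((φ₁ - φ₀) - (ψ₁ - ψ₀))/2) * (Real.sinh θ₀)^2) * Real.sin_sq_add_cos_sq v
      + (1/2 : ℝ) * h2 + (-((ψ₁ - ψ₀)/2)) * Real.cosh_sq_sub_sinh_sq θ₀
end
end
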